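/- arXiv:2604.21145 — 3 statements merged into one kernel-verified Lean document; each statement's English description precedes it below -/
import Mathlib

section
/- Let (V,E,μ) be an infinite, connected, locally finite weighted graph satisfying condition (p₀) with constant p₀>1, let m>1, and set p₁ = 1 + p₀^{1/(m−1)}. If u:V→(0,∞) satisfies Δ_m u(x) ≤ 0 for every x∈V (in particular, if u is any positive solution of (★)), then u satisfies the Harnack-type inequality 1/p₁ ≤ u(y)/u(x) ≤ p₁ for all adjacent vertices x∼y. -/
variable {V : Type*}

/-- Vertex measure `μ(x) = ∑_{y} μ_{xy}` of a weighted graph. -/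
noncomputable def vMeasure (μ : V → V → ℝ) (x : V) : ℝ := ∑ᶠ y, μ x y

/-- The `m`-Laplacian on a weighted graph. -/
noncomputable def lapM (μ : V → V → ℝ) (m : ℝ) (u : V → ℝ) (x : V) : ℝ :=
  (vMeasure μ x)⁻¹ * ∑ᶠ y, μ x y * |u y - u x| ^ (m - 2) * (u y - u x)

lemma aux_upper
    (G : SimpleGraph V) (μ : V → V → ℝ)
    (hnonneg : ∀ x y, 0 ≤ μ x y)
    (hadj : ∀ x y, 0 < μ x y ↔ G.Adj x y)
    (hlf : ∀ x, (G.neighborSet x).Finite)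
    (p₀ : ℝ) (hp₀ : 1 < p₀)
    (hcond : ∀ x y, G.Adj x y → 1 / p₀ ≤ μ x y / vMeasure μ x)
    (m : ℝ) (hm : 1 < m)
    (u : V → ℝ) (hu : ∀ x, 0 < u x)
    (hsub : ∀ x, lapM μ m u x ≤ 0) :
    ∀ x y, G.Adj x y → u y / u x ≤ 1 + p₀ ^ ((1:ℝ) / (m - 1)) := by
  intro x y hxy
  classical
  have hm1 : (0:ℝ) < m - 1 := by linarith
  have hp₀pos : (0:ℝ) < p₀ := by linarith
  have hcpos : (0:ℝ) < p₀ ^ ((1:ℝ) / (m - 1)) := Real.rpow_pos_of_pos hp₀pos _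
  set s : Finset V := (hlf x).toFinset with hs
  have hys : y ∈ s := by simp [hs, Set.Finite.mem_toFinset, SimpleGraph.mem_neighborSet, hxy]
  set f : V → ℝ := fun z => μ x z * |u z - u x| ^ (m - 2) * (u z - u x) with hf
  have hmem : ∀ z, μ x z ≠ 0 → z ∈ s := by
    intro z hz
    have : 0 < μ x z := lt_of_le_of_ne (hnonneg x z) (Ne.symm hz)
    simp [hs, Set.Finite.mem_toFinset, SimpleGraph.mem_neighborSet, (hadj x z).mp this]
  have hvsum : vMeasure μ x = ∑ z ∈ s, μ x z := by
    apply finsum_eq_finset_sum_of_support_subset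
    intro z hz; exact hmem z hz
  have hfsum : (∑ᶠ z, f z) = ∑ z ∈ s, f z := by
    apply finsum_eq_finset_sum_of_support_subset
    intro z hz
    apply hmem z
    intro h; apply hz; simp [hf, h]
  have hμxy : 0 < μ x y := (hadj x y).mpr hxy
  have hv : 0 < vMeasure μ x := by
    rw [hvsum]
    exact lt_of_lt_of_le hμxy (Finset.single_le_sum (fun z _ => hnonneg x z) hys)
  -- sum nonpositive
  have hS : ∑ z ∈ s, f z ≤ 0 := by
    have h := hsub x
    rw [lapM] at h
    have h2 : (∑ᶠ z, f z) ≤ 0 := by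
      by_contra hc
      push_neg at hc
      exact absurd h (not_le.mpr (mul_pos (inv_pos.mpr hv) hc))
    rwa [hfsum] at h2
  -- bound each -f z
  have hbound : ∀ z, -f z ≤ μ x z * u x ^ (m - 1) := by
    intro z
    rcases le_or_gt (u x) (u z) with h | h
    · have h1 : 0 ≤ f z := by
        apply mul_nonneg
        apply mul_nonneg (hnonneg x z) (Real.rpow_nonneg (abs_nonneg _) _)
        linarith
      have h2 : 0 ≤ μ x z * u x ^ (m - 1) :=
        mul_nonneg (hnonneg x z) (Real.rpow_nonneg (le_of_lt (hu x)) _)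
      linarith
    · have ht : 0 < u x - u z := by linarith
      have habs : |u z - u x| = u x - u z := by rw [abs_of_neg (by linarith)]; ring
      have hpow : (u x - u z) ^ (m - 2) * (u x - u z) = (u x - u z) ^ (m - 1) := by
        calc (u x - u z) ^ (m - 2) * (u x - u z)
            = (u x - u z) ^ (m - 2) * (u x - u z) ^ (1:ℝ) := by rw [Real.rpow_one]
          _ = (u x - u z) ^ (m - 2 + 1) := (Real.rpow_add ht _ _).symm
          _ = (u x - u z) ^ (m - 1) := by congr 1; ring
      have : -f z = μ x z * (u x - u z) ^ (m - 1) := by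
        rw [hf]; simp only; rw [habs]
        rw [show -(μ x z * (u x - u z) ^ (m - 2) * (u z - u x)) = μ x z * ((u x - u z) ^ (m - 2) * (u x - u z)) by ring]
        rw [hpow]
      rw [this]
      apply mul_le_mul_of_nonneg_left _ (hnonneg x z)
      apply Real.rpow_le_rpow (le_of_lt ht) (by linarith [hu z]) (le_of_lt hm1)
  -- main inequality
  rcases le_or_gt (u y) (u x) with hle | hgt
  · have : u y / u x ≤ 1 := div_le_one_of_le₀ hle (le_of_lt (hu x))
    linarith
  · have ht : 0 < u y - u x := by linarith
    have hfy : f y = μ x y * (u y - u x) ^ (m - 1) := by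
      rw [hf]; simp only
      rw [abs_of_pos ht]
      rw [show μ x y * (u y - u x) ^ (m - 2) * (u y - u x)
          = μ x y * ((u y - u x) ^ (m - 2) * (u y - u x) ^ (1:ℝ)) by rw [Real.rpow_one]; ring]
      rw [← Real.rpow_add ht]
      ring_nf
    have hkey : f y ≤ ∑ z ∈ s.erase y, -f z := by
      have := Finset.add_sum_erase s f hys
      have h2 : f y + ∑ z ∈ s.erase y, f z ≤ 0 := by rw [this]; exact hS
      have h3 : ∑ z ∈ s.erase y, -f z = -∑ z ∈ s.erase y, f z := by
        rw [Finset.sum_neg_distrib]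
      linarith
    have hkey2 : f y ≤ vMeasure μ x * u x ^ (m - 1) := by
      calc f y ≤ ∑ z ∈ s.erase y, -f z := hkey
        _ ≤ ∑ z ∈ s.erase y, μ x z * u x ^ (m - 1) :=
            Finset.sum_le_sum (fun z _ => hbound z)
        _ ≤ ∑ z ∈ s, μ x z * u x ^ (m - 1) := by
            apply Finset.sum_le_sum_of_subset_of_nonneg (Finset.erase_subset _ _)
            intro z _ _
            exact mul_nonneg (hnonneg x z) (Real.rpow_nonneg (le_of_lt (hu x)) _)
        _ = vMeasure μ x * u x ^ (m - 1) := by rw [hvsum, Finset.sum_mul]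
    have hvle : vMeasure μ x ≤ p₀ * μ x y := by
      have h := hcond x y hxy
      rw [div_le_div_iff₀ hp₀pos hv] at h
      linarith
    have hstep : (u y - u x) ^ (m - 1) ≤ p₀ * u x ^ (m - 1) := by
      have h1 : μ x y * (u y - u x) ^ (m - 1) ≤ p₀ * μ x y * u x ^ (m - 1) := by
        rw [← hfy]
        calc f y ≤ vMeasure μ x * u x ^ (m - 1) := hkey2
          _ ≤ p₀ * μ x y * u x ^ (m - 1) :=
              mul_le_mul_of_nonneg_right hvle (Real.rpow_nonneg (le_of_lt (hu x)) _)
      have := (mul_le_mul_iff_of_pos_left hμxy).mp (by linarith : μ x y * (u y - u x) ^ (m - 1) ≤ μ x y * (p₀ * u x ^ (m - 1)))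
      linarith
    have hfinal : u y - u x ≤ p₀ ^ ((1:ℝ)/(m-1)) * u x := by
      have h2 : p₀ * u x ^ (m - 1) = (p₀ ^ ((1:ℝ)/(m-1)) * u x) ^ (m - 1) := by
        rw [Real.mul_rpow (le_of_lt hcpos) (le_of_lt (hu x)),
          ← Real.rpow_mul (le_of_lt hp₀pos), one_div, inv_mul_cancel₀ (ne_of_gt hm1),
          Real.rpow_one]
      rw [h2] at hstep
      exact (Real.rpow_le_rpow_iff (le_of_lt ht) (le_of_lt (mul_pos hcpos (hu x))) hm1).mp hstep
    rw [div_le_iff₀ (hu x)]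
    nlinarith [hu x]

theorem statement1
    (G : SimpleGraph V) (μ : V → V → ℝ)
    (hsymm : ∀ x y, μ x y = μ y x)
    (hnonneg : ∀ x y, 0 ≤ μ x y)
    (hadj : ∀ x y, 0 < μ x y ↔ G.Adj x y)
    (hinf : Infinite V) (hconn : G.Connected)
    (hlf : ∀ x, (G.neighborSet x).Finite)
    (p₀ : ℝ) (hp₀ : 1 < p₀)
    (hcond : ∀ x y, G.Adj x y → 1 / p₀ ≤ μ x y / vMeasure μ x)
    (m : ℝ) (hm : 1 < m)
    (u : V → ℝ) (hu : ∀ x, 0 < u x)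
    (hsub : ∀ x, lapM μ m u x ≤ 0) :
    ∀ x y, G.Adj x y →
      1 / (1 + p₀ ^ ((1:ℝ) / (m - 1))) ≤ u y / u x ∧
      u y / u x ≤ 1 + p₀ ^ ((1:ℝ) / (m - 1)) := by
  intro x y hxy
  have hcpos : (0:ℝ) < p₀ ^ ((1:ℝ) / (m - 1)) := Real.rpow_pos_of_pos (by linarith) _
  have hupper := aux_upper G μ hnonneg hadj hlf p₀ hp₀ hcond m hm u hu hsub x y hxy
  have hlower := aux_upper G μ hnonneg hadj hlf p₀ hp₀ hcond m hm u hu hsub y x hxy.symm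
  constructor
  · rw [div_le_iff₀ (hu y)] at hlower
    rw [div_le_div_iff₀ (by linarith) (hu x)]
    nlinarith [hu x, hu y]
  · exact hupper
end

section
/- Let (V,E,μ) be an infinite, connected, locally finite weighted graph satisfying condition (p₀), let m>1, fix o∈V, and suppose q ≥ m (region G₂, p∈ℝ arbitrary). If there exist constants C>0 and N∈ℕ such that W_o(n) ≤ C·n^m·(ln n)^{m−1} for all n ≥ N, then every positive solution of (★) on V is constant; i.e., (★) admits no nontrivial positive solution. -/
variable {V : Type*}

/-- The norm of the gradient on a weighted graph. -/
noncomputable def gradNorm (μ : V → V → ℝ) (u : V → ℝ) (x : V) : ℝ :=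
  Real.sqrt (∑ᶠ y, μ x y / (2 * vMeasure μ x) * (u y - u x) ^ 2)

open Classical in
/-- `W_o(n)`: the sum of `μ_{xy}` over pairs `(x,y)` with `x ∈ B(o,n)`, `y ∈ V`
and `d(o,x) < d(o,y)`. -/
noncomputable def Wvol (G : SimpleGraph V) (μ : V → V → ℝ) (o : V) (n : ℕ) : ℝ :=
  ∑ᶠ x, ∑ᶠ y, if G.dist o x ≤ n ∧ G.dist o x < G.dist o y then μ x y else 0


open Real

lemma bern_neg (x : ℝ) (hx : 0 < x) (β : ℝ) (hβ : 0 ≤ β) :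
    1 + β * (1 - x) ≤ x ^ (-β) := by
  rcases le_or_gt (1 + β * (1-x)) 0 with h | h
  · exact h.trans (Real.rpow_pos_of_pos hx _).le
  · have h1 : Real.log (1 + β * (1-x)) ≤ β * (1-x) := by
      have := Real.log_le_sub_one_of_pos h
      linarith
    have h2 : Real.log x ≤ x - 1 := Real.log_le_sub_one_of_pos hx
    have h3 : β * (1-x) ≤ (-β) * Real.log x := by nlinarith
    have h4 : Real.exp (Real.log (1 + β*(1-x))) ≤ Real.exp ((-β) * Real.log x) :=
      Real.exp_le_exp.2 (h1.trans h3)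
    rw [Real.exp_log h] at h4
    rw [Real.rpow_def_of_pos hx, mul_comm (Real.log x)]; exact h4

lemma key1 {m : ℝ} (hm : 1 < m) {a b : ℝ} (ha : 0 < a) (hab : a < b) :
    (m-1) * ((b-a)/b)^m ≤ (b-a)^(m-1) * (a^(1-m) - b^(1-m)) := by
  have hb : (0:ℝ) < b := ha.trans hab
  have hδ : (0:ℝ) < b - a := by linarith
  have hB := bern_neg (a/b) (div_pos ha hb) (m-1) (by linarith)
  have h1ab : 1 - a/b = (b-a)/b := by field_simp
  have hxe : (a/b) ^ (-(m-1)) = (a/b) ^ (1-m) := by ring_nf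
  rw [hxe, h1ab, Real.div_rpow ha.le hb.le] at hB
  -- hB : 1 + (m-1) * ((b-a)/b) ≤ a^(1-m) / b^(1-m)
  have hbp : (0:ℝ) < b ^ (1-m) := Real.rpow_pos_of_pos hb _
  have hB2 : b^(1-m) + (m-1) * ((b-a)/b) * b^(1-m) ≤ a^(1-m) := by
    have := mul_le_mul_of_nonneg_right hB hbp.le
    rw [div_mul_cancel₀] at this
    · linarith [this]
    · exact hbp.ne'
  -- now multiply by (b-a)^(m-1) ≥ 0
  have hδp : (0:ℝ) < (b-a)^(m-1) := Real.rpow_pos_of_pos hδ _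
  have key : (b-a)^(m-1) * ((b-a)/b) * b^(1-m) = ((b-a)/b)^m := by
    rw [Real.div_rpow hδ.le hb.le]
    have e1 : (b-a)^(m-1) * (b-a) = (b-a)^m := by
      rw [← Real.rpow_add_one hδ.ne' (m-1)]; ring_nf
    have e2 : b^(1-m) / b = b^(-m) := by
      rw [← Real.rpow_sub_one hb.ne' (1-m)]; ring_nf
    rw [Real.rpow_neg hb.le] at e2
    field_simp
    rw [mul_comm (b-a) ((b-a)^(m-1)), e1, mul_assoc, ← Real.rpow_add hb]
    rw [show (1:ℝ) - m + m = 1 by ring, Real.rpow_one]; ring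
  calc (m-1) * ((b-a)/b)^m = (b-a)^(m-1) * ((m-1) * ((b-a)/b) * b^(1-m)) := by
        rw [show (b-a)^(m-1) * ((m-1) * ((b-a)/b) * b^(1-m)) = (m-1) * ((b-a)^(m-1) * ((b-a)/b) * b^(1-m)) by ring, key]
    _ ≤ (b-a)^(m-1) * (a^(1-m) - b^(1-m)) := by
        apply mul_le_mul_of_nonneg_left _ hδp.le
        linarith

lemma key2 {m : ℝ} (hm : 1 < m) {s t : ℝ} (hs : 0 ≤ s) (hst : s ≤ t) :
    t^m - s^m ≤ m * t^(m-1) * (t-s) := by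
  have ht : 0 ≤ t := hs.trans hst
  rcases ht.lt_or_eq with htp | hte
  · have hB := one_add_mul_self_le_rpow_one_add
      (s := s/t - 1) (by have := div_nonneg hs ht; linarith) (p := m) hm.le
    have h1 : (1 : ℝ) + (s/t - 1) = s/t := by ring
    rw [h1, Real.div_rpow hs ht] at hB
    have htm : (0:ℝ) < t ^ m := Real.rpow_pos_of_pos htp _
    have hB2 : t^m + m * (s/t - 1) * t^m ≤ s^m := by
      have := mul_le_mul_of_nonneg_right hB htm.le
      rw [add_mul, one_mul, div_mul_cancel₀ _ htm.ne'] at this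
      exact this
    have e1 : t^(m-1) * t = t^m := by
      rw [← Real.rpow_add_one htp.ne' (m-1)]; ring_nf
    have e2 : m * (s/t - 1) * t^m = m * t^(m-1) * (s - t) := by
      field_simp
      rw [← e1]; ring
    rw [e2] at hB2
    linarith
  · rw [← hte, Real.zero_rpow (by linarith : m ≠ 0)]
    have : s = 0 := le_antisymm (hst.trans hte.symm.le) hs
    rw [this, Real.zero_rpow (by linarith : m ≠ 0)]
    simp

lemma split_pow {γ : ℝ} (hγ : 0 ≤ γ) {s h : ℝ} (hs : 0 ≤ s) (hh : 0 ≤ h) :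
    (s + h)^γ ≤ 2^γ * (s^γ + h^γ) := by
  have h1 : s + h ≤ 2 * max s h := by
    rcases max_cases s h with ⟨he, hle⟩ | ⟨he, hle⟩ <;> rw [he] <;> linarith
  have h2 : (s+h)^γ ≤ (2 * max s h)^γ :=
    Real.rpow_le_rpow (by linarith) h1 hγ
  rw [Real.mul_rpow (by norm_num) (le_max_of_le_left hs)] at h2
  refine h2.trans (mul_le_mul_of_nonneg_left ?_ (Real.rpow_nonneg (by norm_num) _))
  rcases max_cases s h with ⟨he, hle⟩ | ⟨he, hle⟩ <;> rw [he]
  · nlinarith [Real.rpow_nonneg hh γ]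
  · nlinarith [Real.rpow_nonneg hs γ]

lemma young_step {m : ℝ} (hm : 1 < m) {X h : ℝ} (hX : 0 ≤ X) (hh : 0 ≤ h) :
    m * 2^(m-1) * (X^(m-1) * h) ≤ (m-1)/2 * X^m + 2^(m*m-1) * h^m := by
  have hm0 : (0:ℝ) < m := by linarith
  have w1 : ℝ := (m-1)/m
  have hgm := Real.geom_mean_le_arith_mean2_weighted
    (w₁ := (m-1)/m) (w₂ := 1/m) (p₁ := 2^(-m) * X^m) (p₂ := 2^(m*(m-1)) * h^m)
    (div_nonneg (by linarith) (by linarith)) (by positivity)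
    (by positivity) (by positivity) (by field_simp; ring)
  have e1 : (2^(-m) * X^m : ℝ) ^ ((m-1)/m) = 2^(-(m-1)) * X^(m-1) := by
    rw [Real.mul_rpow (by positivity) (Real.rpow_nonneg hX m),
        ← Real.rpow_mul (by norm_num : (0:ℝ) ≤ 2), ← Real.rpow_mul hX,
        show -m * ((m-1)/m) = -(m-1) by field_simp,
        show m * ((m-1)/m) = m-1 by field_simp]
  have e2 : (2^(m*(m-1)) * h^m : ℝ) ^ (1/m) = 2^(m-1) * h := by
    rw [Real.mul_rpow (by positivity) (Real.rpow_nonneg hh m),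
        ← Real.rpow_mul (by norm_num : (0:ℝ) ≤ 2), ← Real.rpow_mul hh]
    rw [show m * (m-1) * (1/m) = m - 1 by field_simp,
        show m * (1/m) = 1 by field_simp, Real.rpow_one]
  rw [e1, e2] at hgm
  have e3 : 2^(-(m-1)) * X^(m-1) * (2^(m-1) * h) = X^(m-1) * h := by
    rw [show (2:ℝ)^(-(m-1)) * X^(m-1) * (2^(m-1) * h)
        = (2^(-(m-1)) * 2^(m-1)) * (X^(m-1) * h) by ring,
       ← Real.rpow_add (by norm_num : (0:ℝ) < 2)]
    norm_num
  rw [e3] at hgm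
  have hfin := mul_le_mul_of_nonneg_left hgm (by positivity : (0:ℝ) ≤ m * 2^(m-1))
  refine hfin.trans ?_
  have e4 : (2:ℝ)^(m-1) * 2^(m*(m-1)) = 2^(m*m-1) := by
    rw [← Real.rpow_add (by norm_num : (0:ℝ) < 2)]; ring_nf
  have hX' : (0:ℝ) ≤ X ^ m := Real.rpow_nonneg hX m
  have hh' : (0:ℝ) ≤ h ^ m := Real.rpow_nonneg hh m
  have hcalc : m * 2^(m-1) * ((m-1)/m * (2^(-m) * X^m) + 1/m * (2^(m*(m-1)) * h^m))
      = (m-1) * (2^(m-1) * 2^(-m)) * X^m + (2^(m-1) * 2^(m*(m-1))) * h^m := by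
    field_simp
  rw [hcalc, e4]
  have e5 : (2:ℝ)^(m-1) * 2^(-m) = 2⁻¹ := by
    rw [← Real.rpow_add (by norm_num : (0:ℝ) < 2)]
    norm_num [show m - 1 + -m = -1 by ring, Real.rpow_neg_one]
  rw [e5]
  have : (m-1) * 2⁻¹ * X^m = (m-1)/2 * X^m := by ring
  rw [this]

lemma lemP_aux {m : ℝ} (hm : 1 < m) {a b s t : ℝ} (ha : 0 < a) (hab : a ≤ b)
    (hs0 : 0 ≤ s) (hs1 : s ≤ 1) (ht0 : 0 ≤ t) (ht1 : t ≤ 1) :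
    |b - a| ^ (m-2) * (b - a) * (t^m * b^(1-m) - s^m * a^(1-m)) ≤
      -((m-1)/2) * (min s t)^m * (|b - a| / max a b)^m
        + (2^(m*m-1) + m*2^(m-1)) * |t - s|^m := by
  have hb : (0:ℝ) < b := ha.trans_le hab
  have hm0 : m ≠ 0 := by linarith
  have hc7 : (0:ℝ) ≤ 2^(m*m-1) + m*2^(m-1) := by positivity
  rcases hab.lt_or_eq with hlt | heq
  case inr =>
    rw [← heq]
    simp only [sub_self, abs_zero, mul_zero, zero_mul]
    have h0 : (0:ℝ) / max a a = 0 := by simp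
    rw [h0, Real.zero_rpow hm0]
    have : |b-a|^(m-2) * 0 * (t^m*b^(1-m) - s^m*a^(1-m)) = 0 := by ring
    have h2 : (0:ℝ) ≤ (2^(m*m-1) + m*2^(m-1)) * |t-s|^m := by positivity
    nlinarith [this]
  case inl =>
  have hδ : (0:ℝ) < b - a := by linarith
  have habs : |b - a| = b - a := abs_of_pos hδ
  have hmax : max a b = b := max_eq_right hab
  rw [habs, hmax]
  have hE1 : (b-a) ^ (m-2) * (b-a) = (b-a)^(m-1) := by
    rw [← Real.rpow_add_one hδ.ne' (m-2)]; ring_nf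
  rw [show (b-a)^(m-2) * (b-a) * (t^m * b^(1-m) - s^m * a^(1-m))
      = ((b-a)^(m-2) * (b-a)) * (t^m * b^(1-m) - s^m * a^(1-m)) by ring, hE1]
  set θ : ℝ := (b-a)/b with hθdef
  have hθ : 0 < θ := div_pos hδ hb
  have hθ1 : θ ≤ 1 := by
    rw [div_le_one hb]; linarith
  have hθm1 : (b-a)^(m-1) * b^(1-m) = θ^(m-1) := by
    rw [hθdef, Real.div_rpow hδ.le hb.le]
    rw [show (1:ℝ)-m = -(m-1) by ring, Real.rpow_neg hb.le]
    field_simp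
  have hK1 : (m-1) * θ^m ≤ (b-a)^(m-1) * (a^(1-m) - b^(1-m)) := key1 hm ha hlt
  have hsm : (0:ℝ) ≤ s^m := Real.rpow_nonneg hs0 _
  have htm : (0:ℝ) ≤ t^m := Real.rpow_nonneg ht0 _
  have hθmp : (0:ℝ) < θ^m := Real.rpow_pos_of_pos hθ _
  have hδm1 : (0:ℝ) < (b-a)^(m-1) := Real.rpow_pos_of_pos hδ _
  rcases le_or_gt t s with hts | hst
  · -- case t ≤ s
    have hmin : min s t = t := min_eq_right hts
    rw [hmin]
    have h1 : t^m ≤ s^m := Real.rpow_le_rpow ht0 hts (by linarith)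
    have hap : (0:ℝ) < a^(1-m) := Real.rpow_pos_of_pos ha _
    have hE2 : (b-a)^(m-1) * (t^m * b^(1-m) - s^m * a^(1-m))
        ≤ (b-a)^(m-1) * (t^m * b^(1-m) - t^m * a^(1-m)) := by
      apply mul_le_mul_of_nonneg_left _ hδm1.le
      nlinarith
    have hE3 : (b-a)^(m-1) * (t^m * b^(1-m) - t^m * a^(1-m))
        = -(t^m * ((b-a)^(m-1) * (a^(1-m) - b^(1-m)))) := by ring
    have hE4 : -(t^m * ((b-a)^(m-1) * (a^(1-m) - b^(1-m)))) ≤ -(t^m * ((m-1) * θ^m)) := by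
      have := mul_le_mul_of_nonneg_left hK1 htm
      linarith
    have habs2 : (0:ℝ) ≤ (2^(m*m-1) + m*2^(m-1)) * |t-s|^m := by positivity
    have hP : (0:ℝ) ≤ t^m * θ^m := mul_nonneg htm hθmp.le
    have : -(t^m * ((m-1)*θ^m)) ≤ -((m-1)/2) * t^m * θ^m := by nlinarith [hP]
    linarith
  · -- case s < t
    have hmin : min s t = s := min_eq_left hst.le
    rw [hmin]
    set h : ℝ := t - s with hhdef
    have hh : 0 < h := by rw [hhdef]; linarith
    have habs3 : |t - s| = h := abs_of_pos hh
    rw [habs3]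
    have hE2 : (b-a)^(m-1) * (t^m * b^(1-m) - s^m * a^(1-m))
        = θ^(m-1) * (t^m - s^m) - s^m * ((b-a)^(m-1) * (a^(1-m) - b^(1-m))) := by
      rw [← hθm1]; ring
    rw [hE2]
    have hK2 : t^m - s^m ≤ m * t^(m-1) * h := key2 hm hs0 hst.le
    have hθm1p : (0:ℝ) < θ^(m-1) := Real.rpow_pos_of_pos hθ _
    have hcross1 : θ^(m-1) * (t^m - s^m) ≤ θ^(m-1) * (m * t^(m-1) * h) :=
      mul_le_mul_of_nonneg_left hK2 hθm1p.le
    have hsplit : t^(m-1) ≤ 2^(m-1) * (s^(m-1) + h^(m-1)) := by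
      have : t = s + h := by rw [hhdef]; ring
      rw [this]
      exact split_pow (by linarith) hs0 hh.le
    have hcross2 : θ^(m-1) * (m * t^(m-1) * h)
        ≤ m * 2^(m-1) * ((θ*s)^(m-1) * h) + m * 2^(m-1) * (θ^(m-1) * h^(m-1) * h) := by
      have e : (θ*s)^(m-1) = θ^(m-1) * s^(m-1) := Real.mul_rpow hθ.le hs0
      rw [e]
      have hnn : (0:ℝ) ≤ θ^(m-1) * (m*h) :=
        mul_nonneg hθm1p.le (mul_nonneg (by linarith) hh.le)
      have h2 := mul_le_mul_of_nonneg_left hsplit hnn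
      linarith [h2]
    have hyoung : m * 2^(m-1) * ((θ*s)^(m-1) * h)
        ≤ (m-1)/2 * (θ*s)^m + 2^(m*m-1) * h^m :=
      young_step hm (by positivity) hh.le
    have hθsm : (θ*s)^m = θ^m * s^m := Real.mul_rpow hθ.le hs0
    have hlast : θ^(m-1) * h^(m-1) * h ≤ h^m := by
      have e : h^(m-1) * h = h^m := by
        rw [← Real.rpow_add_one hh.ne' (m-1)]; ring_nf
      have hθle : θ^(m-1) ≤ 1 := Real.rpow_le_one hθ.le hθ1 (by linarith)
      have h3 : θ^(m-1) * (h^(m-1)*h) ≤ 1 * (h^(m-1)*h) :=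
        mul_le_mul_of_nonneg_right hθle (by positivity)
      rw [mul_assoc, e]
      rw [one_mul, e] at h3
      exact h3
    have hK1' : s^m * ((m-1) * θ^m) ≤ s^m * ((b-a)^(m-1) * (a^(1-m) - b^(1-m))) :=
      mul_le_mul_of_nonneg_left hK1 hsm
    have hhm : (0:ℝ) ≤ h^m := Real.rpow_nonneg hh.le _
    rw [hθsm] at hyoung
    have hlast' : m * 2^(m-1) * (θ^(m-1) * h^(m-1) * h) ≤ m * 2^(m-1) * h^m :=
      mul_le_mul_of_nonneg_left hlast
        (mul_nonneg (by linarith) (by positivity))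
    have c1 := (hcross1.trans hcross2).trans (add_le_add hyoung hlast')
    linarith only [c1, hK1']

lemma lemP {m : ℝ} (hm : 1 < m) {a b s t : ℝ} (ha : 0 < a) (hb : 0 < b)
    (hs0 : 0 ≤ s) (hs1 : s ≤ 1) (ht0 : 0 ≤ t) (ht1 : t ≤ 1) :
    |b - a| ^ (m-2) * (b - a) * (t^m * b^(1-m) - s^m * a^(1-m)) ≤
      -((m-1)/2) * (min s t)^m * (|b - a| / max a b)^m
        + (2^(m*m-1) + m*2^(m-1)) * |t - s|^m := by
  rcases le_total a b with hab | hab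
  · exact lemP_aux hm ha hab hs0 hs1 ht0 ht1
  · have H := lemP_aux hm hb hab ht0 ht1 hs0 hs1
    rw [abs_sub_comm a b, min_comm t s, max_comm b a, abs_sub_comm s t] at H
    have e : |b-a|^(m-2) * (a-b) * (s^m * a^(1-m) - t^m * b^(1-m))
        = |b-a|^(m-2) * (b-a) * (t^m * b^(1-m) - s^m * a^(1-m)) := by ring
    rw [e] at H
    exact H
open SimpleGraph

section
variable {V : Type*} (G : SimpleGraph V)

lemma getVert_dist_le (hconn : G.Connected) (o x : V) (p : G.Walk o x) (i : ℕ) :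
    G.dist o (p.getVert i) ≤ i := by
  induction i with
  | zero => simp [p.getVert_zero, SimpleGraph.dist_self]
  | succ i ih =>
    rcases lt_or_ge i p.length with hi | hi
    · have hadj := p.adj_getVert_succ hi
      have h1 : G.dist o (p.getVert (i+1)) ≤ G.dist o (p.getVert i)
          + G.dist (p.getVert i) (p.getVert (i+1)) := hconn.dist_triangle
      have h2 : G.dist (p.getVert i) (p.getVert (i+1)) ≤ 1 :=
        SimpleGraph.dist_le (SimpleGraph.Walk.cons hadj SimpleGraph.Walk.nil)
      omega
    · rw [p.getVert_of_length_le (by omega), ← p.getVert_of_length_le hi]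
      omega

lemma pred_exists (hconn : G.Connected) (o x : V) (hx : G.dist o x ≠ 0) :
    ∃ y, G.Adj y x ∧ G.dist o y + 1 = G.dist o x := by
  obtain ⟨p, hp⟩ := SimpleGraph.exists_walk_of_dist_ne_zero hx
  set d := G.dist o x with hd
  have hadj : G.Adj (p.getVert (d-1)) x := by
    have h := p.adj_getVert_succ (i := p.length - 1) (by omega)
    rw [show p.length - 1 + 1 = p.length by omega, p.getVert_length] at h
    rw [show d - 1 = p.length - 1 by omega]
    exact h
  refine ⟨p.getVert (d-1), hadj, ?_⟩
  · have h1 : G.dist o (p.getVert (d-1)) ≤ d - 1 := getVert_dist_le G hconn o x p (d-1)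
    have h2 : d ≤ G.dist o (p.getVert (d-1)) + 1 := by
      have h3 : G.dist o x ≤ G.dist o (p.getVert (d-1)) + G.dist (p.getVert (d-1)) x :=
        hconn.dist_triangle
      have h4 : G.dist (p.getVert (d-1)) x ≤ 1 :=
        SimpleGraph.dist_le (SimpleGraph.Walk.cons hadj SimpleGraph.Walk.nil)
      omega
    omega

lemma ball_finite (hconn : G.Connected) (hlf : ∀ x, (G.neighborSet x).Finite) (o : V) :
    ∀ n : ℕ, {x : V | G.dist o x ≤ n}.Finite := by
  intro n
  induction n with
  | zero =>
    apply Set.Finite.subset (Set.finite_singleton o)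
    intro x hx
    simp only [Set.mem_setOf_eq, Nat.le_zero] at hx
    simp [(hconn.dist_eq_zero_iff.mp hx).symm]
  | succ n ih =>
    apply Set.Finite.subset (ih.union (Set.Finite.biUnion ih (fun y _ => hlf y)))
    intro x hx
    simp only [Set.mem_setOf_eq] at hx
    rcases le_or_gt (G.dist o x) n with h | h
    · exact Or.inl h
    · have hne : G.dist o x ≠ 0 := by omega
      obtain ⟨y, hyx, hyd⟩ := pred_exists G hconn o x hne
      have hy : y ∈ {x : V | G.dist o x ≤ n} := by
        simp only [Set.mem_setOf_eq]; omega
      exact Or.inr (Set.mem_biUnion hy hyx)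

lemma sphere_exists (hconn : G.Connected) (hlf : ∀ x, (G.neighborSet x).Finite)
    (hinf : Infinite V) (o : V) : ∀ k : ℕ, ∃ x : V, G.dist o x = k := by
  have hdown : ∀ j : ℕ, ∀ x : V, ∀ k : ℕ, G.dist o x = k + j → ∃ y, G.dist o y = k := by
    intro j
    induction j with
    | zero => exact fun x k hx => ⟨x, by omega⟩
    | succ j ih =>
      intro x k hx
      obtain ⟨y, _, hyd⟩ := pred_exists G hconn o x (by omega)
      exact ih y k (by omega)
  intro k
  have : ∃ x : V, k ≤ G.dist o x := by
    by_contra hcon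
    push_neg at hcon
    have : (Set.univ : Set V).Finite :=
      Set.Finite.subset (ball_finite G hconn hlf o k) (fun x _ => (hcon x).le)
    exact Set.infinite_univ this
  obtain ⟨x, hx⟩ := this
  exact hdown (G.dist o x - k) x k (by omega)

end

section
variable {V : Type*}

lemma main_ineq (G : SimpleGraph V) (μ : V → V → ℝ) (o : V)
    (hsymm : ∀ x y, μ x y = μ y x) (hnonneg : ∀ x y, 0 ≤ μ x y)
    (hμadj : ∀ x y, μ x y ≠ 0 → G.Adj x y)
    (hdadj : ∀ x y, G.Adj x y → G.dist o y ≤ G.dist o x + 1)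
    (m : ℝ) (hm : 1 < m) (u : V → ℝ) (hu : ∀ x, 0 < u x)
    (hL : ∀ x, (∑ᶠ y, μ x y * |u y - u x| ^ (m-2) * (u y - u x)) ≤ 0)
    (n : ℕ) (f : ℕ → ℝ) (hf0 : ∀ k, 0 ≤ f k) (hf1 : ∀ k, f k ≤ 1)
    (hfz : ∀ k, n ≤ k → f k = 0)
    (K' : Finset V) (hKin : ∀ x, G.dist o x ≤ n + 1 → x ∈ K') :
    ((m-1)/2) * (∑ x ∈ K', ∑ y ∈ K', μ x y *
        ((min (f (G.dist o x)) (f (G.dist o y)))^m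
          * (|u y - u x| / max (u x) (u y))^m))
      ≤ (2^(m*m-1) + m*2^(m-1)) * (∑ x ∈ K', ∑ y ∈ K', μ x y *
          |f (G.dist o y) - f (G.dist o x)|^m) := by
  have hm0 : m ≠ 0 := by linarith
  set c : ℝ := (m-1)/2 with hc
  set c7 : ℝ := 2^(m*m-1) + m*2^(m-1) with hc7
  set g : V → V → ℝ := fun x y => μ x y * |u y - u x| ^ (m-2) * (u y - u x) with hg
  set ψ : V → ℝ := fun x => (f (G.dist o x))^m * (u x)^(1-m) with hψ
  have hψ0 : ∀ x, 0 ≤ ψ x := fun x =>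
    mul_nonneg (Real.rpow_nonneg (hf0 _) _) (Real.rpow_nonneg (hu x).le _)
  set T : ℝ := ∑ x ∈ K', ψ x * ∑ y ∈ K', g x y with hT
  have hTle : T ≤ 0 := by
    apply Finset.sum_nonpos
    intro x _
    rcases eq_or_ne (f (G.dist o x)) 0 with hf | hf
    · have : ψ x = 0 := by
        simp only [hψ, hf, Real.zero_rpow hm0, zero_mul]
      rw [this, zero_mul]
    · have hdx : G.dist o x < n := by
        by_contra hcon
        exact hf (hfz _ (by omega))
      have hsupp : (Function.support (fun y => g x y)) ⊆ (K' : Set V) := by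
        intro y hy
        have hμ : μ x y ≠ 0 := by
          intro h0
          apply hy
          simp only [hg, h0, zero_mul]
        have := hdadj x y (hμadj x y hμ)
        exact hKin y (by omega)
      have hconv : ∑ y ∈ K', g x y = ∑ᶠ y, g x y :=
        (finsum_eq_sum_of_support_subset _ hsupp).symm
      rw [hconv]
      exact mul_nonpos_iff.2 (Or.inl ⟨hψ0 x, hL x⟩)
  have hganti : ∀ a b, g a b = -(g b a) := by
    intro a b
    simp only [hg]
    rw [hsymm a b, abs_sub_comm (u b) (u a)]
    ring
  have hswap : ∑ x ∈ K', ∑ y ∈ K', g x y * ψ y = -T := by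
    rw [Finset.sum_comm]
    have e : ∀ y, ∑ x ∈ K', g x y * ψ y = -(ψ y * ∑ x ∈ K', g y x) := by
      intro y
      rw [Finset.mul_sum, ← Finset.sum_neg_distrib]
      apply Finset.sum_congr rfl
      intro x _
      rw [hganti x y]; ring
    rw [Finset.sum_congr rfl (fun y _ => e y), Finset.sum_neg_distrib, hT]
  have hsum0 : 0 ≤ ∑ x ∈ K', ∑ y ∈ K', g x y * (ψ y - ψ x) := by
    have e : ∀ x, ∑ y ∈ K', g x y * (ψ y - ψ x)
        = (∑ y ∈ K', g x y * ψ y) - ψ x * ∑ y ∈ K', g x y := by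
      intro x
      rw [Finset.mul_sum, ← Finset.sum_sub_distrib]
      apply Finset.sum_congr rfl
      intro y _; ring
    rw [Finset.sum_congr rfl (fun x _ => e x), Finset.sum_sub_distrib, hswap]
    linarith [hTle]
  have hpoint : ∀ x ∈ K', ∀ y ∈ K', g x y * (ψ y - ψ x) ≤
      -c * (μ x y * ((min (f (G.dist o x)) (f (G.dist o y)))^m
          * (|u y - u x| / max (u x) (u y))^m))
        + c7 * (μ x y * |f (G.dist o y) - f (G.dist o x)|^m) := by
    intro x _ y _
    have hP := lemP hm (hu x) (hu y) (hf0 (G.dist o x)) (hf1 (G.dist o x))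
      (hf0 (G.dist o y)) (hf1 (G.dist o y))
    have hP2 := mul_le_mul_of_nonneg_left hP (hnonneg x y)
    calc g x y * (ψ y - ψ x)
        = μ x y * (|u y - u x| ^ (m-2) * (u y - u x) *
            ((f (G.dist o y))^m * (u y)^(1-m) - (f (G.dist o x))^m * (u x)^(1-m))) := by
          simp only [hg, hψ]; ring
      _ ≤ μ x y * (-((m-1)/2) * (min (f (G.dist o x)) (f (G.dist o y)))^m
            * (|u y - u x| / max (u x) (u y))^m
            + (2^(m*m-1) + m*2^(m-1)) * |f (G.dist o y) - f (G.dist o x)|^m) := by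
          have e2 : μ x y * (|u y - u x| ^ (m-2) * (u y - u x) *
              ((f (G.dist o y))^m * (u y)^(1-m) - (f (G.dist o x))^m * (u x)^(1-m)))
              = μ x y * (|u y - u x| ^ (m-2) * (u y - u x) *
              ((f (G.dist o y))^m * (u y)^(1-m) - (f (G.dist o x))^m * (u x)^(1-m))) := rfl
          calc μ x y * (|u y - u x| ^ (m-2) * (u y - u x) *
              ((f (G.dist o y))^m * (u y)^(1-m) - (f (G.dist o x))^m * (u x)^(1-m)))
              = μ x y * (|u y - u x| ^ (m-2) * (u y - u x) *
                ((f (G.dist o y))^m * (u y)^(1-m) - (f (G.dist o x))^m * (u x)^(1-m))) := rfl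
            _ ≤ _ := by
                have := hP2
                calc μ x y * (|u y - u x| ^ (m-2) * (u y - u x) *
                    ((f (G.dist o y))^m * (u y)^(1-m) - (f (G.dist o x))^m * (u x)^(1-m)))
                    = μ x y * (|u y - u x| ^ (m-2) * (u y - u x) *
                      ((f (G.dist o y))^m * (u y)^(1-m) - (f (G.dist o x))^m * (u x)^(1-m))) := rfl
                  _ ≤ _ := this
      _ = -c * (μ x y * ((min (f (G.dist o x)) (f (G.dist o y)))^m
            * (|u y - u x| / max (u x) (u y))^m))
          + c7 * (μ x y * |f (G.dist o y) - f (G.dist o x)|^m) := by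
          simp only [hc, hc7]; ring
  have hstep : ∑ x ∈ K', ∑ y ∈ K', g x y * (ψ y - ψ x) ≤
      -c * (∑ x ∈ K', ∑ y ∈ K', μ x y * ((min (f (G.dist o x)) (f (G.dist o y)))^m
          * (|u y - u x| / max (u x) (u y))^m))
        + c7 * (∑ x ∈ K', ∑ y ∈ K', μ x y * |f (G.dist o y) - f (G.dist o x)|^m) := by
    have h1 : ∑ x ∈ K', ∑ y ∈ K', g x y * (ψ y - ψ x) ≤
        ∑ x ∈ K', ∑ y ∈ K', (-c * (μ x y * ((min (f (G.dist o x)) (f (G.dist o y)))^m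
          * (|u y - u x| / max (u x) (u y))^m))
          + c7 * (μ x y * |f (G.dist o y) - f (G.dist o x)|^m)) := by
      apply Finset.sum_le_sum
      intro x hx
      apply Finset.sum_le_sum
      intro y hy
      exact hpoint x hx y hy
    refine h1.trans_eq ?_
    have e2 : ∀ x, ∑ y ∈ K', (-c * (μ x y * ((min (f (G.dist o x)) (f (G.dist o y)))^m
          * (|u y - u x| / max (u x) (u y))^m))
          + c7 * (μ x y * |f (G.dist o y) - f (G.dist o x)|^m))
        = -c * (∑ y ∈ K', μ x y * ((min (f (G.dist o x)) (f (G.dist o y)))^m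
          * (|u y - u x| / max (u x) (u y))^m))
          + c7 * (∑ y ∈ K', μ x y * |f (G.dist o y) - f (G.dist o x)|^m) := by
      intro x
      rw [Finset.sum_add_distrib, ← Finset.mul_sum, ← Finset.mul_sum]
    rw [Finset.sum_congr rfl (fun x _ => e2 x), Finset.sum_add_distrib,
        ← Finset.mul_sum, ← Finset.mul_sum]
  have := hsum0.trans hstep
  simp only [hc, hc7] at this ⊢
  linarith [this]

end
section
variable {V : Type*}

open Classical in
lemma energy_bound (G : SimpleGraph V) (μ : V → V → ℝ) (o : V)
    (hsymm : ∀ x y, μ x y = μ y x) (hnonneg : ∀ x y, 0 ≤ μ x y)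
    (hμadj : ∀ x y, μ x y ≠ 0 → G.Adj x y)
    (hdadj : ∀ x y, G.Adj x y → G.dist o y ≤ G.dist o x + 1)
    (m : ℝ) (hm : 1 < m)
    (n A : ℕ) (f : ℕ → ℝ) (σ : ℕ → ℝ) (hσ0 : ∀ k, 0 ≤ σ k)
    (hstep : ∀ k, f k - f (k+1) = σ k)
    (hσz : ∀ k, (k < A ∨ n ≤ k) → σ k = 0)
    (K' : Finset V) (crF : ℕ → ℝ) (hcrF0 : ∀ k, 0 ≤ crF k)
    (hcr : ∀ k, (∑ x ∈ K', ∑ y ∈ K',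
        if G.dist o x = k ∧ G.dist o y = k + 1 then μ x y else 0) ≤ crF k) :
    ∑ x ∈ K', ∑ y ∈ K', μ x y * |f (G.dist o y) - f (G.dist o x)|^m
      ≤ 2 * ∑ k ∈ Finset.Ico A n, σ k ^ m * crF k := by
  have hm0 : m ≠ 0 := by linarith
  have hadj3 : ∀ x y, μ x y ≠ 0 → (G.dist o y = G.dist o x + 1 ∨ G.dist o x = G.dist o y + 1 ∨ G.dist o x = G.dist o y) := by
    intro x y hμ
    have h1 := hdadj x y (hμadj x y hμ)
    have h2 := hdadj y x (hμadj x y hμ).symm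
    omega
  -- pointwise bound
  have hpt : ∀ x y, μ x y * |f (G.dist o y) - f (G.dist o x)|^m ≤
      (if G.dist o x < G.dist o y then μ x y * σ (G.dist o x) ^ m else 0)
        + (if G.dist o y < G.dist o x then μ x y * σ (G.dist o y) ^ m else 0) := by
    intro x y
    have hRHS : 0 ≤ (if G.dist o x < G.dist o y then μ x y * σ (G.dist o x) ^ m else 0)
        + (if G.dist o y < G.dist o x then μ x y * σ (G.dist o y) ^ m else 0) := by
      refine add_nonneg ?_ ?_ <;> split <;>
        first
          | exact mul_nonneg (hnonneg _ _) (Real.rpow_nonneg (hσ0 _) _)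
          | exact le_rfl
    rcases eq_or_ne (μ x y) 0 with hμ | hμ
    · have hL0 : μ x y * |f (G.dist o y) - f (G.dist o x)|^m = 0 := by
        rw [hμ, zero_mul]
      rw [hL0]; exact hRHS
    · rcases hadj3 x y hμ with h | h | h
      · have e1 : f (G.dist o y) - f (G.dist o x) = -(σ (G.dist o x)) := by
          rw [h, ← hstep (G.dist o x)]; ring
        rw [e1, abs_neg, abs_of_nonneg (hσ0 _)]
        rw [if_pos (by omega), if_neg (by omega), add_zero]
      · have e1 : f (G.dist o y) - f (G.dist o x) = σ (G.dist o y) := by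
          rw [h, ← hstep (G.dist o y)]
        rw [e1, abs_of_nonneg (hσ0 _)]
        rw [if_neg (by omega), if_pos (by omega), zero_add]
      · have hL0 : μ x y * |f (G.dist o y) - f (G.dist o x)|^m = 0 := by
          rw [h, sub_self, abs_zero, Real.zero_rpow hm0, mul_zero]
        rw [hL0]; exact hRHS
  have hsum1 : ∑ x ∈ K', ∑ y ∈ K', μ x y * |f (G.dist o y) - f (G.dist o x)|^m ≤
      (∑ x ∈ K', ∑ y ∈ K', if G.dist o x < G.dist o y then μ x y * σ (G.dist o x) ^ m else 0)
        + (∑ x ∈ K', ∑ y ∈ K', if G.dist o y < G.dist o x then μ x y * σ (G.dist o y) ^ m else 0) := by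
    rw [← Finset.sum_add_distrib]
    apply Finset.sum_le_sum
    intro x _
    rw [← Finset.sum_add_distrib]
    exact Finset.sum_le_sum (fun y _ => hpt x y)
  have hswap2 : (∑ x ∈ K', ∑ y ∈ K', if G.dist o y < G.dist o x then μ x y * σ (G.dist o y) ^ m else 0)
      = (∑ x ∈ K', ∑ y ∈ K', if G.dist o x < G.dist o y then μ x y * σ (G.dist o x) ^ m else 0) := by
    rw [Finset.sum_comm]
    apply Finset.sum_congr rfl
    intro y _
    apply Finset.sum_congr rfl
    intro x _
    rw [hsymm]
  -- bound the one-sided sum by the shell decomposition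
  have hone : (∑ x ∈ K', ∑ y ∈ K', if G.dist o x < G.dist o y then μ x y * σ (G.dist o x) ^ m else 0)
      ≤ ∑ k ∈ Finset.Ico A n, σ k ^ m * crF k := by
    have hptk : ∀ x y, (if G.dist o x < G.dist o y then μ x y * σ (G.dist o x) ^ m else 0)
        ≤ ∑ k ∈ Finset.Ico A n, σ k ^ m *
            (if G.dist o x = k ∧ G.dist o y = k + 1 then μ x y else 0) := by
      intro x y
      have hRHS0 : 0 ≤ ∑ k ∈ Finset.Ico A n, σ k ^ m *
          (if G.dist o x = k ∧ G.dist o y = k + 1 then μ x y else 0) := by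
        apply Finset.sum_nonneg
        intro k _
        apply mul_nonneg (Real.rpow_nonneg (hσ0 _) _)
        split
        · exact hnonneg _ _
        · exact le_refl 0
      rcases lt_or_ge (G.dist o x) (G.dist o y) with hlt | hge
      · rw [if_pos hlt]
        rcases eq_or_ne (μ x y) 0 with hμ | hμ
        · have hL0 : μ x y * σ (G.dist o x) ^ m = 0 := by rw [hμ, zero_mul]
          rw [hL0]; exact hRHS0
        · have hdy : G.dist o y = G.dist o x + 1 := by
            have := hadj3 x y hμ; omega
          by_cases hmem : G.dist o x ∈ Finset.Ico A n
          · have : ∑ k ∈ Finset.Ico A n, σ k ^ m *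
                (if G.dist o x = k ∧ G.dist o y = k + 1 then μ x y else 0)
                = σ (G.dist o x) ^ m * μ x y := by
              rw [Finset.sum_eq_single_of_mem (G.dist o x) hmem]
              · rw [if_pos ⟨rfl, by omega⟩]
              · intro k hk hkne
                rw [if_neg (by omega), mul_zero]
            rw [this, mul_comm]
          · have : σ (G.dist o x) = 0 := by
              apply hσz
              simp only [Finset.mem_Ico] at hmem
              omega
            rw [this, Real.zero_rpow hm0, mul_zero]
            exact hRHS0
      · rw [if_neg (by omega)]; exact hRHS0
    calc (∑ x ∈ K', ∑ y ∈ K', if G.dist o x < G.dist o y then μ x y * σ (G.dist o x) ^ m else 0)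
        ≤ ∑ x ∈ K', ∑ y ∈ K', ∑ k ∈ Finset.Ico A n, σ k ^ m *
            (if G.dist o x = k ∧ G.dist o y = k + 1 then μ x y else 0) := by
          apply Finset.sum_le_sum; intro x _
          exact Finset.sum_le_sum (fun y _ => hptk x y)
      _ = ∑ k ∈ Finset.Ico A n, σ k ^ m * (∑ x ∈ K', ∑ y ∈ K',
            (if G.dist o x = k ∧ G.dist o y = k + 1 then μ x y else 0)) := by
          rw [Finset.sum_congr rfl (fun x _ => Finset.sum_comm), Finset.sum_comm]
          apply Finset.sum_congr rfl
          intro k _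
          rw [Finset.mul_sum]
          apply Finset.sum_congr rfl
          intro x _
          rw [Finset.mul_sum]
      _ ≤ ∑ k ∈ Finset.Ico A n, σ k ^ m * crF k := by
          apply Finset.sum_le_sum
          intro k _
          exact mul_le_mul_of_nonneg_left (hcr k) (Real.rpow_nonneg (hσ0 _) _)
  calc ∑ x ∈ K', ∑ y ∈ K', μ x y * |f (G.dist o y) - f (G.dist o x)|^m
      ≤ (∑ x ∈ K', ∑ y ∈ K', if G.dist o x < G.dist o y then μ x y * σ (G.dist o x) ^ m else 0)
        + (∑ x ∈ K', ∑ y ∈ K', if G.dist o y < G.dist o x then μ x y * σ (G.dist o y) ^ m else 0) := hsum1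
    _ = 2 * (∑ x ∈ K', ∑ y ∈ K', if G.dist o x < G.dist o y then μ x y * σ (G.dist o x) ^ m else 0) := by
        rw [hswap2]; ring
    _ ≤ 2 * ∑ k ∈ Finset.Ico A n, σ k ^ m * crF k := by linarith [hone]

end

lemma jensen_block {α : ℝ} (hα : 0 < α) (s : Finset ℕ) (hcard : 0 < s.card)
    (w : ℕ → ℝ) (hw : ∀ k ∈ s, 0 < w k) (Vb : ℝ) (hV : 0 < Vb)
    (hsum : ∑ k ∈ s, w k ≤ Vb) :
    (s.card : ℝ) * (1+α) / 2 * (2 * (α/(1+α)) * Vb / (s.card : ℝ))^(-α)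
      ≤ ∑ k ∈ s, (w k)^(-α) := by
  have h1α : (0:ℝ) < 1 + α := by linarith
  have hcR : (0:ℝ) < (s.card : ℝ) := by exact_mod_cast hcard
  set w₁ : ℝ := 1/(1+α) with hw₁
  set w₂ : ℝ := α/(1+α) with hw₂
  have hw₁p : 0 < w₁ := by positivity
  have hw₂p : 0 < w₂ := by rw [hw₂]; positivity
  set lam : ℝ := 2 * w₂ * Vb / (s.card : ℝ) with hlam
  have hlamp : 0 < lam := by rw [hlam]; positivity
  have hpt : ∀ k ∈ s, 1 ≤ w₁ * ((w k)^(-α) * lam^α) + w₂ * (w k / lam) := by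
    intro k hk
    have hwk : 0 < w k / lam := div_pos (hw k hk) hlamp
    have hgm := Real.geom_mean_le_arith_mean2_weighted
      (w₁ := w₁) (w₂ := w₂) (p₁ := (w k / lam)^(-α)) (p₂ := w k / lam)
      hw₁p.le hw₂p.le (Real.rpow_nonneg hwk.le _) hwk.le
      (by rw [hw₁, hw₂]; field_simp)
    have e : ((w k / lam)^(-α))^w₁ * (w k / lam)^w₂ = 1 := by
      rw [← Real.rpow_mul hwk.le, ← Real.rpow_add hwk,
          show -α*w₁ + w₂ = 0 by rw [hw₁, hw₂]; field_simp; ring,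
          Real.rpow_zero]
    rw [e] at hgm
    have e2 : (w k / lam)^(-α) = (w k)^(-α) * lam^α := by
      rw [Real.div_rpow (hw k hk).le hlamp.le, Real.rpow_neg (hw k hk).le,
          Real.rpow_neg hlamp.le]
      field_simp
    rw [e2] at hgm
    exact hgm
  have hsum2 : (s.card : ℝ) ≤ w₁ * lam^α * (∑ k ∈ s, (w k)^(-α)) + w₂ * Vb / lam := by
    have h1 : (s.card : ℝ) = ∑ _k ∈ s, (1:ℝ) := by
      rw [Finset.sum_const, nsmul_eq_mul, mul_one]
    have h2 := Finset.sum_le_sum hpt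
    have h3 : ∑ k ∈ s, (w₁ * ((w k)^(-α) * lam^α) + w₂ * (w k / lam))
        = w₁ * lam^α * (∑ k ∈ s, (w k)^(-α)) + w₂ * (∑ k ∈ s, w k) / lam := by
      rw [Finset.sum_add_distrib]
      congr 1
      · rw [Finset.mul_sum]
        exact Finset.sum_congr rfl (fun k _ => by ring)
      · rw [Finset.mul_sum, Finset.sum_div]
        exact Finset.sum_congr rfl (fun k _ => by ring)
    rw [h3] at h2
    have h4 : (w₂ * (∑ k ∈ s, w k)) / lam ≤ (w₂ * Vb) / lam := by gcongr
    linarith [h2, h4, h1.le, h1.ge]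
  have hlal : (0:ℝ) < lam^α := Real.rpow_pos_of_pos hlamp α
  have hkey : (s.card:ℝ)/2 ≤ w₁ * lam^α * (∑ k ∈ s, (w k)^(-α)) := by
    have e5 : w₂ * Vb / lam = (s.card:ℝ)/2 := by
      rw [hlam]; field_simp
    rw [e5] at hsum2; linarith
  have e3 : (1+α) * (w₁ * lam^α * (∑ k ∈ s, (w k)^(-α)))
      = lam^α * (∑ k ∈ s, (w k)^(-α)) := by
    rw [hw₁]; field_simp
  have hkey2 : (s.card:ℝ)*(1+α)/2 ≤ lam^α * (∑ k ∈ s, (w k)^(-α)) := by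
    have := mul_le_mul_of_nonneg_left hkey h1α.le
    rw [e3] at this
    linarith
  rw [Real.rpow_neg hlamp.le]
  rw [mul_inv_le_iff₀ hlal]
  linarith
section
variable {V : Type*} (G : SimpleGraph V) (μ : V → V → ℝ) (o : V)

lemma cr_posX (hconn : G.Connected) (hlf : ∀ x, (G.neighborSet x).Finite)
    (hinf : Infinite V)
    (hadj : ∀ x y, 0 < μ x y ↔ G.Adj x y) (hnonneg : ∀ x y, 0 ≤ μ x y)
    (hpred : ∀ x, G.dist o x ≠ 0 → ∃ y, G.Adj y x ∧ G.dist o y + 1 = G.dist o x)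
    (hsph : ∀ k : ℕ, ∃ x : V, G.dist o x = k)
    (k : ℕ) (K : Finset V) (hK : ∀ x, G.dist o x ≤ k + 1 → x ∈ K) :
    0 < ∑ x ∈ K, ∑ y ∈ K, if G.dist o x = k ∧ G.dist o y = k+1 then μ x y else 0 := by
  obtain ⟨z, hz⟩ := hsph (k+1)
  obtain ⟨y, hyz, hyd⟩ := hpred z (by omega)
  have hinner_nonneg : ∀ x, 0 ≤ ∑ y ∈ K, (if G.dist o x = k ∧ G.dist o y = k+1 then μ x y else 0) := by
    intro x
    apply Finset.sum_nonneg
    intro y _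
    split
    · exact hnonneg x y
    · exact le_rfl
  apply Finset.sum_pos' (fun x _ => hinner_nonneg x)
  refine ⟨y, hK y (by omega), ?_⟩
  apply Finset.sum_pos'
  · intro t _
    split
    · exact hnonneg y t
    · exact le_rfl
  · refine ⟨z, hK z (by omega), ?_⟩
    rw [if_pos ⟨by omega, hz⟩]
    exact (hadj y z).2 hyz

end
section
variable {V : Type*} (G : SimpleGraph V) (μ : V → V → ℝ) (o : V)

lemma cr_ext (k : ℕ) (B K : Finset V) (hB : ∀ x, x ∈ B ↔ G.dist o x ≤ k+1) (hBK : B ⊆ K) :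
    ∑ x ∈ K, ∑ y ∈ K, (if G.dist o x = k ∧ G.dist o y = k+1 then μ x y else 0)
      = ∑ x ∈ B, ∑ y ∈ B, (if G.dist o x = k ∧ G.dist o y = k+1 then μ x y else 0) := by
  have hinner : ∀ x : V, ∑ y ∈ K, (if G.dist o x = k ∧ G.dist o y = k+1 then μ x y else 0)
      = ∑ y ∈ B, (if G.dist o x = k ∧ G.dist o y = k+1 then μ x y else 0) := by
    intro x
    symm
    apply Finset.sum_subset hBK
    intro y _ hy
    apply if_neg
    rintro ⟨h1, h2⟩
    exact hy ((hB y).2 (by omega))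
  rw [Finset.sum_congr rfl (fun x _ => hinner x)]
  symm
  apply Finset.sum_subset hBK
  intro x _ hx
  apply Finset.sum_eq_zero
  intro y _
  apply if_neg
  rintro ⟨h1, _⟩
  exact hx ((hB x).2 (by omega))

lemma cr_le (hnonneg : ∀ x y, 0 ≤ μ x y) (k : ℕ) (B K : Finset V)
    (hB : ∀ x, x ∈ B ↔ G.dist o x ≤ k+1) :
    ∑ x ∈ K, ∑ y ∈ K, (if G.dist o x = k ∧ G.dist o y = k+1 then μ x y else 0)
      ≤ ∑ x ∈ B, ∑ y ∈ B, (if G.dist o x = k ∧ G.dist o y = k+1 then μ x y else 0) := by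
  classical
  have hnn : ∀ x y : V, 0 ≤ (if G.dist o x = k ∧ G.dist o y = k+1 then μ x y else 0) := by
    intro x y; split
    · exact hnonneg x y
    · exact le_rfl
  have h1 : ∑ x ∈ K, ∑ y ∈ K, (if G.dist o x = k ∧ G.dist o y = k+1 then μ x y else 0)
      ≤ ∑ x ∈ K ∪ B, ∑ y ∈ K ∪ B, (if G.dist o x = k ∧ G.dist o y = k+1 then μ x y else 0) := by
    have ha : ∀ x : V, ∑ y ∈ K, (if G.dist o x = k ∧ G.dist o y = k+1 then μ x y else 0)
        ≤ ∑ y ∈ K ∪ B, (if G.dist o x = k ∧ G.dist o y = k+1 then μ x y else 0) :=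
      fun x => Finset.sum_le_sum_of_subset_of_nonneg Finset.subset_union_left
        (fun y _ _ => hnn x y)
    calc ∑ x ∈ K, ∑ y ∈ K, (if G.dist o x = k ∧ G.dist o y = k+1 then μ x y else 0)
        ≤ ∑ x ∈ K, ∑ y ∈ K ∪ B, (if G.dist o x = k ∧ G.dist o y = k+1 then μ x y else 0) :=
          Finset.sum_le_sum (fun x _ => ha x)
      _ ≤ ∑ x ∈ K ∪ B, ∑ y ∈ K ∪ B, (if G.dist o x = k ∧ G.dist o y = k+1 then μ x y else 0) :=
          Finset.sum_le_sum_of_subset_of_nonneg Finset.subset_union_left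
            (fun x _ _ => Finset.sum_nonneg (fun y _ => hnn x y))
  exact h1.trans_eq (cr_ext G μ o k B (K ∪ B) hB Finset.subset_union_right)

end



section
variable {V : Type*} (G : SimpleGraph V) (μ : V → V → ℝ) (o : V)

lemma wvol_eq (hμadj : ∀ x y, μ x y ≠ 0 → G.Adj x y)
    (hdadj : ∀ x y, G.Adj x y → G.dist o y ≤ G.dist o x + 1)
    (J : ℕ) (K : Finset V) (hK : ∀ x, G.dist o x ≤ J + 1 → x ∈ K) :
    Wvol G μ o J = ∑ x ∈ K, ∑ y ∈ K,
      if G.dist o x ≤ J ∧ G.dist o x < G.dist o y then μ x y else 0 := by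
  have hinner : ∀ x, (∑ᶠ y, if G.dist o x ≤ J ∧ G.dist o x < G.dist o y then μ x y else 0)
      = ∑ y ∈ K, if G.dist o x ≤ J ∧ G.dist o x < G.dist o y then μ x y else 0 := by
    intro x
    rcases le_or_gt (G.dist o x) J with hx | hx
    · apply finsum_eq_sum_of_support_subset
      intro y hy
      simp only [Function.mem_support] at hy
      by_cases hc : G.dist o x ≤ J ∧ G.dist o x < G.dist o y
      · have hμ : μ x y ≠ 0 := fun h0 => hy (by rw [if_pos hc]; exact h0)
        have := hdadj x y (hμadj x y hμ)
        exact Finset.mem_coe.2 (hK y (by omega))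
      · exact absurd (if_neg hc) hy
    · have hz : ∀ y : V, (if G.dist o x ≤ J ∧ G.dist o x < G.dist o y then μ x y else 0) = 0 :=
        fun y => if_neg (by omega)
      rw [finsum_congr hz, finsum_zero]
      exact (Finset.sum_eq_zero (fun y _ => hz y)).symm
  rw [Wvol]
  have hout : (Function.support fun x =>
      ∑ᶠ y, if G.dist o x ≤ J ∧ G.dist o x < G.dist o y then μ x y else 0) ⊆ (K : Set V) := by
    intro x hx
    simp only [Function.mem_support] at hx
    rcases le_or_gt (G.dist o x) J with h | h
    · exact Finset.mem_coe.2 (hK x (by omega))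
    · exfalso
      apply hx
      have hz : ∀ y : V, (if G.dist o x ≤ J ∧ G.dist o x < G.dist o y then μ x y else 0) = 0 :=
        fun y => if_neg (by omega)
      rw [finsum_congr hz, finsum_zero]
  rw [finsum_eq_sum_of_support_subset _ hout]
  exact Finset.sum_congr rfl (fun x _ => hinner x)

lemma crsum_le_wvol (hnonneg : ∀ x y, 0 ≤ μ x y)
    (hμadj : ∀ x y, μ x y ≠ 0 → G.Adj x y)
    (hdadj : ∀ x y, G.Adj x y → G.dist o y ≤ G.dist o x + 1)
    (a b J : ℕ) (hbJ : b ≤ J + 1)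
    (K : Finset V) (hK : ∀ x, G.dist o x ≤ J + 1 → x ∈ K) :
    ∑ k ∈ Finset.Ico a b, (∑ x ∈ K, ∑ y ∈ K,
        if G.dist o x = k ∧ G.dist o y = k+1 then μ x y else 0)
      ≤ Wvol G μ o J := by
  rw [wvol_eq G μ o hμadj hdadj J K hK]
  have hpair : ∀ x y : V, (∑ k ∈ Finset.Ico a b,
      if G.dist o x = k ∧ G.dist o y = k+1 then μ x y else 0)
      ≤ (if G.dist o x ≤ J ∧ G.dist o x < G.dist o y then μ x y else 0) := by
    intro x y
    by_cases h : G.dist o x ∈ Finset.Ico a b ∧ G.dist o y = G.dist o x + 1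
    · have e : (∑ k ∈ Finset.Ico a b,
          if G.dist o x = k ∧ G.dist o y = k+1 then μ x y else 0) = μ x y := by
        rw [Finset.sum_eq_single_of_mem (G.dist o x) h.1]
        · rw [if_pos ⟨rfl, by omega⟩]
        · intro k hk hkne
          rw [if_neg (by omega)]
      rw [e]
      have hm := h.1
      simp only [Finset.mem_Ico] at hm
      rw [if_pos ⟨by omega, by omega⟩]
    · have e : (∑ k ∈ Finset.Ico a b,
          if G.dist o x = k ∧ G.dist o y = k+1 then μ x y else 0) = 0 := by
        apply Finset.sum_eq_zero
        intro k hk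
        simp only [Finset.mem_Ico] at hk
        apply if_neg
        rintro ⟨h1, h2⟩
        exact h ⟨by simp only [Finset.mem_Ico]; omega, by omega⟩
      rw [e]
      split
      · exact hnonneg x y
      · exact le_rfl
  calc ∑ k ∈ Finset.Ico a b, (∑ x ∈ K, ∑ y ∈ K,
        if G.dist o x = k ∧ G.dist o y = k+1 then μ x y else 0)
      = ∑ x ∈ K, ∑ k ∈ Finset.Ico a b, (∑ y ∈ K,
        if G.dist o x = k ∧ G.dist o y = k+1 then μ x y else 0) := Finset.sum_comm
    _ = ∑ x ∈ K, ∑ y ∈ K, ∑ k ∈ Finset.Ico a b,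
        (if G.dist o x = k ∧ G.dist o y = k+1 then μ x y else 0) :=
        Finset.sum_congr rfl (fun x _ => Finset.sum_comm)
    _ ≤ ∑ x ∈ K, ∑ y ∈ K,
        (if G.dist o x ≤ J ∧ G.dist o x < G.dist o y then μ x y else 0) := by
        apply Finset.sum_le_sum
        intro x _
        exact Finset.sum_le_sum (fun y _ => hpair x y)

end


lemma Ei_eq {α m C : ℝ} (hα : 0 < α) (hαm : α*(m-1) = 1) (hC : 0 < C) (i : ℕ) :
    (2:ℝ)^i * (1+α)/2 *
      ((2*(α/(1+α))*C) * ((2:ℝ)^(i+1))^m * (((i:ℝ)+1) * Real.log 2)^(m-1) / ((2:ℝ)^i))^(-α)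
    = ((1+α)/2 * Real.exp (-(α * Real.log (2*(α/(1+α))*C)) - α*m*Real.log 2) / Real.log 2)
        * (((i:ℝ)+1))⁻¹ := by
  have hl2 : 0 < Real.log 2 := Real.log_pos (by norm_num)
  have h1α : (0:ℝ) < 1+α := by linarith
  have hw2 : (0:ℝ) < 2*(α/(1+α))*C := by positivity
  have hXp : (0:ℝ) < (i:ℝ)+1 := by positivity
  have hP : (0:ℝ) < (2:ℝ)^(i+1) := by positivity
  have hPm : (0:ℝ) < ((2:ℝ)^(i+1))^m := Real.rpow_pos_of_pos hP m
  have hR : (0:ℝ) < ((i:ℝ)+1) * Real.log 2 := by positivity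
  have hRm : (0:ℝ) < (((i:ℝ)+1) * Real.log 2)^(m-1) := Real.rpow_pos_of_pos hR _
  have h2i : (0:ℝ) < (2:ℝ)^i := by positivity
  have harg : (0:ℝ) < (2*(α/(1+α))*C) * ((2:ℝ)^(i+1))^m
      * (((i:ℝ)+1) * Real.log 2)^(m-1) / (2:ℝ)^i := by positivity
  rw [Real.rpow_def_of_pos harg]
  rw [Real.log_div (by positivity) h2i.ne']
  rw [Real.log_mul (by positivity) hRm.ne']
  rw [Real.log_mul hw2.ne' hPm.ne']
  rw [Real.log_rpow hP, Real.log_rpow hR]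
  rw [Real.log_pow, Real.log_pow]
  push_cast
  have hE : (Real.log (2*(α/(1+α))*C) + m*(((i:ℝ)+1)*Real.log 2)
        + (m-1)*Real.log (((i:ℝ)+1)*Real.log 2) - (i:ℝ)*Real.log 2) * (-α)
      = (-(α * Real.log (2*(α/(1+α))*C)) - α*m*Real.log 2) + (-((i:ℝ)*Real.log 2))
        + (-(Real.log (((i:ℝ)+1)*Real.log 2))) := by
    linear_combination (-(i:ℝ)*Real.log 2 - Real.log (((i:ℝ)+1)*Real.log 2)) * hαm
  rw [hE, Real.exp_add, Real.exp_add, Real.exp_neg (Real.log (((i:ℝ)+1)*Real.log 2)),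
      Real.exp_log hR]
  have h2e : Real.exp (-((i:ℝ)*Real.log 2)) = ((2:ℝ)^i)⁻¹ := by
    rw [Real.exp_neg]
    congr 1
    rw [← Real.log_pow, Real.exp_log h2i]
  rw [h2e]
  field_simp

theorem statement5
    (G : SimpleGraph V) (μ : V → V → ℝ)
    (hsymm : ∀ x y, μ x y = μ y x)
    (hnonneg : ∀ x y, 0 ≤ μ x y)
    (hadj : ∀ x y, 0 < μ x y ↔ G.Adj x y)
    (hinf : Infinite V) (hconn : G.Connected)
    (hlf : ∀ x, (G.neighborSet x).Finite)
    (p₀ : ℝ) (hp₀ : 1 < p₀)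
    (hcond : ∀ x y, G.Adj x y → 1 / p₀ ≤ μ x y / vMeasure μ x)
    (m p q : ℝ) (hm : 1 < m)
    (hq : m ≤ q)
    (o : V) (C : ℝ) (hC : 0 < C) (N : ℕ)
    (hW : ∀ n : ℕ, N ≤ n →
      Wvol G μ o n ≤
        C * (n : ℝ) ^ m * (Real.log n) ^ (m - 1))
    (u : V → ℝ) (hu : ∀ x, 0 < u x)
    (hgrad : ∀ x, q < 0 → 0 < gradNorm μ u x)
    (hsol : ∀ x, lapM μ m u x + u x ^ p * gradNorm μ u x ^ q ≤ 0) :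
    ∃ c : ℝ, ∀ x, u x = c := by
  classical
  have hμadj : ∀ x y, μ x y ≠ 0 → G.Adj x y :=
    fun x y h => (hadj x y).1 ((hnonneg x y).lt_of_ne (Ne.symm h))
  have hdadj : ∀ x y, G.Adj x y → G.dist o y ≤ G.dist o x + 1 := by
    intro x y hxy
    have h1 : G.dist o y ≤ G.dist o x + G.dist x y := hconn.dist_triangle
    have h2 : G.dist x y ≤ 1 :=
      SimpleGraph.dist_le (SimpleGraph.Walk.cons hxy SimpleGraph.Walk.nil)
    omega
  have hBall := ball_finite G hconn hlf o
  have hsph := sphere_exists G hconn hlf hinf o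
  have hnbr : ∀ x : V, ∃ y, G.Adj x y := by
    intro x
    obtain ⟨w, hw⟩ := sphere_exists G hconn hlf hinf x 1
    obtain ⟨y, hyw, hyd⟩ := pred_exists G hconn x w (by omega)
    have h0 : G.dist x y = 0 := by omega
    have hxy : x = y := (hconn.dist_eq_zero_iff).1 h0
    exact ⟨w, hxy ▸ hyw⟩
  have hvm : ∀ x, 0 < vMeasure μ x := by
    intro x
    obtain ⟨y0, hy0⟩ := hnbr x
    have hfin : (Function.support fun y => μ x y) ⊆ ((hlf x).toFinset : Set V) := by
      intro y hy
      simp only [Function.mem_support] at hy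
      simp only [Finset.coe_sort_coe, Set.Finite.coe_toFinset]
      exact hμadj x y hy
    rw [vMeasure, finsum_eq_sum_of_support_subset _ hfin]
    exact Finset.sum_pos' (fun y _ => hnonneg x y)
      ⟨y0, (hlf x).mem_toFinset.2 hy0, (hadj x y0).2 hy0⟩
  have hL : ∀ x, (∑ᶠ y, μ x y * |u y - u x| ^ (m - 2) * (u y - u x)) ≤ 0 := by
    intro x
    have h1 := hsol x
    have hgn : 0 ≤ gradNorm μ u x := by rw [gradNorm]; exact Real.sqrt_nonneg _
    have h2 : 0 ≤ u x ^ p * gradNorm μ u x ^ q :=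
      mul_nonneg (Real.rpow_nonneg (hu x).le _) (Real.rpow_nonneg hgn _)
    have h3 : lapM μ m u x ≤ 0 := by linarith
    rw [lapM] at h3
    have h4 := hvm x
    by_contra hcon
    push_neg at hcon
    nlinarith [mul_pos (inv_pos.2 h4) hcon]
  by_contra hnc
  push_neg at hnc
  obtain ⟨x₀, y₀, hxy₀, hne₀⟩ : ∃ x y, G.Adj x y ∧ u x ≠ u y := by
    by_contra hall
    push_neg at hall
    have hwalk : ∀ (a b : V) (w : G.Walk a b), u a = u b := by
      intro a b w
      induction w with
      | nil => rfl
      | cons h pw ih => exact (hall _ _ h).trans ih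
    obtain ⟨x, hx⟩ := hnc (u o)
    exact hx (hwalk o x (hconn o x).some).symm
  have hm1 : (0:ℝ) < m - 1 := by linarith
  set α : ℝ := 1/(m-1) with hαdef
  have hα : 0 < α := by positivity
  have hαm : α * (m-1) = 1 := by rw [hαdef]; field_simp
  set c7 : ℝ := 2^(m*m-1) + m*2^(m-1) with hc7def
  have hc7 : 0 < c7 := by
    have ha : (0:ℝ) < 2^(m*m-1) := Real.rpow_pos_of_pos (by norm_num) _
    have hb : (0:ℝ) < m * 2^(m-1) :=
      mul_pos (by linarith) (Real.rpow_pos_of_pos (by norm_num) _)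
    rw [hc7def]; linarith
  set r₀ : ℕ := max (G.dist o x₀) (G.dist o y₀) with hr₀
  set A : ℕ := max (max r₀ N) 2 with hA
  set Θ₀ : ℝ := |u y₀ - u x₀| / max (u x₀) (u y₀) with hΘ₀def
  have hΘ₀ : 0 < Θ₀ := div_pos (abs_pos.2 (sub_ne_zero.2 (Ne.symm hne₀)))
    (lt_max_of_lt_left (hu x₀))
  have hμ₀ : 0 < μ x₀ y₀ := (hadj x₀ y₀).2 hxy₀
  set ε : ℝ := ((m-1)/2) * (μ x₀ y₀ * Θ₀^m) with hεdef
  have hε : 0 < ε :=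
    mul_pos (by linarith) (mul_pos hμ₀ (Real.rpow_pos_of_pos hΘ₀ _))
  set cr : ℕ → ℝ := fun k => ∑ x ∈ (hBall (k+1)).toFinset, ∑ y ∈ (hBall (k+1)).toFinset,
    (if G.dist o x = k ∧ G.dist o y = k+1 then μ x y else 0) with hcrdef
  have hcrmem : ∀ k : ℕ, ∀ x : V, x ∈ (hBall (k+1)).toFinset ↔ G.dist o x ≤ k+1 := by
    intro k x; rw [Set.Finite.mem_toFinset]; exact Iff.rfl
  have hcrpos : ∀ k, 0 < cr k := by
    intro k
    exact cr_posX G μ o hconn hlf hinf hadj hnonneg (pred_exists G hconn o) hsph k _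
      (fun x hx => ((hcrmem k x).2 hx))
  have hcr0 : ∀ k, 0 ≤ cr k := fun k => (hcrpos k).le
  set v : ℕ → ℝ := fun k => (cr k)^(-α) with hvdef
  have hv : ∀ k, 0 < v k := fun k => Real.rpow_pos_of_pos (hcrpos k) _
  set S : ℕ → ℝ := fun J => ∑ k ∈ Finset.Ico A (2^J), v k with hSdef
  -- MAIN PER-SCALE INEQUALITY
  have hmain : ∀ J : ℕ, A < 2^J → ε ≤ 2 * c7 * (S J)^(1-m) := by
    intro J hAJ
    have hSpos : 0 < S J := by
      rw [hSdef]
      exact Finset.sum_pos (fun k _ => hv k) ⟨A, Finset.mem_Ico.2 ⟨le_rfl, hAJ⟩⟩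
    set KJ : Finset V := (hBall (2^J+2)).toFinset with hKJ
    have hKJmem : ∀ x : V, x ∈ KJ ↔ G.dist o x ≤ 2^J+2 := by
      intro x; rw [hKJ, Set.Finite.mem_toFinset]; exact Iff.rfl
    set f : ℕ → ℝ := fun k => (∑ j ∈ Finset.Ico (max k A) (2^J), v j) / S J with hfdef
    have hf0 : ∀ k, 0 ≤ f k :=
      fun k => div_nonneg (Finset.sum_nonneg (fun j _ => (hv j).le)) hSpos.le
    have hsubS : ∀ k, ∑ j ∈ Finset.Ico (max k A) (2^J), v j ≤ S J := by
      intro k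
      rw [hSdef]
      apply Finset.sum_le_sum_of_subset_of_nonneg
      · exact Finset.Ico_subset_Ico (le_max_right k A) le_rfl
      · exact fun j _ _ => (hv j).le
    have hf1 : ∀ k, f k ≤ 1 := fun k => (div_le_one hSpos).2 (hsubS k)
    have hfz : ∀ k, 2^J ≤ k → f k = 0 := by
      intro k hk
      have he : Finset.Ico (max k A) (2^J) = ∅ :=
        Finset.Ico_eq_empty (by omega)
      rw [hfdef]
      simp only []
      rw [he, Finset.sum_empty, zero_div]
    have hfA : ∀ k, k ≤ A → f k = 1 := by
      intro k hk
      rw [hfdef]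
      simp only []
      rw [max_eq_right hk]
      exact div_self hSpos.ne'
    set σ : ℕ → ℝ := fun k => (if A ≤ k ∧ k < 2^J then v k else 0) / S J with hσdef
    have hσ0 : ∀ k, 0 ≤ σ k := by
      intro k
      apply div_nonneg _ hSpos.le
      split
      · exact (hv k).le
      · exact le_rfl
    have hσz : ∀ k, (k < A ∨ 2^J ≤ k) → σ k = 0 := by
      intro k hk
      rw [hσdef]
      simp only []
      rw [if_neg (by omega), zero_div]
    have hstep : ∀ k, f k - f (k+1) = σ k := by
      intro k
      rw [hfdef, hσdef]
      simp only []
      rcases lt_or_ge k A with hkA | hkA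
      · rw [max_eq_right hkA.le, max_eq_right (by omega : k+1 ≤ A),
            if_neg (by omega), zero_div, sub_self]
      · rcases lt_or_ge k (2^J) with hkn | hkn
        · rw [max_eq_left hkA, max_eq_left (by omega : A ≤ k+1), if_pos ⟨hkA, hkn⟩,
              Finset.sum_eq_sum_Ico_succ_bot hkn]
          ring
        · rw [Finset.Ico_eq_empty (by omega : ¬ max k A < 2^J),
              Finset.Ico_eq_empty (by omega : ¬ max (k+1) A < 2^J), if_neg (by omega)]
          simp
    have hKin : ∀ x, G.dist o x ≤ 2^J + 1 → x ∈ KJ :=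
      fun x hx => (hKJmem x).2 (by omega)
    have hMI := main_ineq G μ o hsymm hnonneg hμadj hdadj m hm u hu hL (2^J) f hf0 hf1 hfz KJ hKin
    have hEB := energy_bound G μ o hsymm hnonneg hμadj hdadj m hm (2^J) A f σ hσ0 hstep hσz
      KJ cr hcr0
      (fun k => cr_le G μ o hnonneg k ((hBall (k+1)).toFinset) KJ (hcrmem k))
    have hsum_eq : ∑ k ∈ Finset.Ico A (2^J), σ k ^ m * cr k = (S J)^(1-m) := by
      have hterm : ∀ k ∈ Finset.Ico A (2^J), σ k ^ m * cr k = v k / (S J)^m := by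
        intro k hk
        simp only [Finset.mem_Ico] at hk
        rw [hσdef]
        simp only []
        rw [if_pos ⟨hk.1, hk.2⟩, Real.div_rpow (hv k).le hSpos.le]
        have e1 : (v k)^m = (cr k)^(-α*m) := by
          rw [hvdef]
          simp only []
          rw [← Real.rpow_mul (hcrpos k).le]
        rw [e1, div_mul_eq_mul_div, ← Real.rpow_add_one (hcrpos k).ne' (-α*m)]
        have e2 : -α*m + 1 = -α := by linear_combination - hαm
        rw [e2, hvdef]
      rw [Finset.sum_congr rfl hterm, ← Finset.sum_div]
      rw [Real.rpow_sub hSpos, Real.rpow_one]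
    have hx₀A : G.dist o x₀ ≤ A := by
      have h1 : G.dist o x₀ ≤ r₀ := le_max_left _ _
      have h2 : r₀ ≤ A := le_trans (le_max_left r₀ N) (le_max_left _ 2)
      omega
    have hy₀A : G.dist o y₀ ≤ A := by
      have h1 : G.dist o y₀ ≤ r₀ := le_max_right _ _
      have h2 : r₀ ≤ A := le_trans (le_max_left r₀ N) (le_max_left _ 2)
      omega
    have hx₀K : x₀ ∈ KJ := (hKJmem x₀).2 (by omega)
    have hy₀K : y₀ ∈ KJ := (hKJmem y₀).2 (by omega)
    have hF0 : ∀ x y : V, 0 ≤ μ x y * ((min (f (G.dist o x)) (f (G.dist o y)))^m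
        * (|u y - u x| / max (u x) (u y))^m) := by
      intro x y
      apply mul_nonneg (hnonneg x y)
      apply mul_nonneg (Real.rpow_nonneg (le_min (hf0 _) (hf0 _)) _)
      apply Real.rpow_nonneg
      apply div_nonneg (abs_nonneg _)
      exact le_trans (hu x).le (le_max_left _ _)
    have hterm₀ : μ x₀ y₀ * Θ₀^m ≤ ∑ x ∈ KJ, ∑ y ∈ KJ, μ x y *
        ((min (f (G.dist o x)) (f (G.dist o y)))^m
          * (|u y - u x| / max (u x) (u y))^m) := by
      have hval : μ x₀ y₀ * ((min (f (G.dist o x₀)) (f (G.dist o y₀)))^m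
          * (|u y₀ - u x₀| / max (u x₀) (u y₀))^m) = μ x₀ y₀ * Θ₀^m := by
        rw [hfA _ hx₀A, hfA _ hy₀A, min_self, Real.one_rpow, one_mul, hΘ₀def]
      have h1 : μ x₀ y₀ * ((min (f (G.dist o x₀)) (f (G.dist o y₀)))^m
          * (|u y₀ - u x₀| / max (u x₀) (u y₀))^m)
          ≤ ∑ y ∈ KJ, μ x₀ y * ((min (f (G.dist o x₀)) (f (G.dist o y)))^m
            * (|u y - u x₀| / max (u x₀) (u y))^m) :=
        Finset.single_le_sum (fun y _ => hF0 x₀ y) hy₀K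
      have h2 : ∑ y ∈ KJ, μ x₀ y * ((min (f (G.dist o x₀)) (f (G.dist o y)))^m
            * (|u y - u x₀| / max (u x₀) (u y))^m)
          ≤ ∑ x ∈ KJ, ∑ y ∈ KJ, μ x y * ((min (f (G.dist o x)) (f (G.dist o y)))^m
            * (|u y - u x| / max (u x) (u y))^m) :=
        Finset.single_le_sum (fun x _ => Finset.sum_nonneg (fun y _ => hF0 x y)) hx₀K
      rw [← hval]
      exact h1.trans h2
    have hchain1 : ε ≤ ((m-1)/2) * (∑ x ∈ KJ, ∑ y ∈ KJ, μ x y *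
        ((min (f (G.dist o x)) (f (G.dist o y)))^m
          * (|u y - u x| / max (u x) (u y))^m)) := by
      rw [hεdef]
      exact mul_le_mul_of_nonneg_left hterm₀ (by linarith)
    have hchain2 := hchain1.trans hMI
    have hchain3 : (2^(m*m-1) + m*2^(m-1)) * (∑ x ∈ KJ, ∑ y ∈ KJ, μ x y *
          |f (G.dist o y) - f (G.dist o x)|^m)
        ≤ c7 * (2 * ((S J)^(1-m))) := by
      rw [← hsum_eq, ← hc7def]
      exact mul_le_mul_of_nonneg_left hEB hc7.le
    have := hchain2.trans hchain3
    linarith [this]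
  -- BLOCK LOWER BOUNDS
  set κ : ℝ := (1+α)/2 * Real.exp (-(α * Real.log (2*(α/(1+α))*C)) - α*m*Real.log 2)
      / Real.log 2 with hκdef
  have hl2 : 0 < Real.log 2 := Real.log_pos (by norm_num)
  have hκ : 0 < κ := by
    rw [hκdef]
    apply div_pos _ hl2
    exact mul_pos (by positivity) (Real.exp_pos _)
  have hVi : ∀ i : ℕ, A ≤ 2^i → (∑ k ∈ Finset.Ico (2^i) (2^(i+1)), cr k)
      ≤ C * ((2:ℝ)^(i+1))^m * ((((i:ℝ))+1) * Real.log 2)^(m-1) := by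
    intro i hi
    have h2pos : (1:ℕ) ≤ 2^(i+1) := Nat.one_le_two_pow
    set Ki : Finset V := (hBall (2^(i+1))).toFinset with hKi
    have hKimem : ∀ x : V, x ∈ Ki ↔ G.dist o x ≤ 2^(i+1) := by
      intro x; rw [hKi, Set.Finite.mem_toFinset]; exact Iff.rfl
    have h2 : ∀ k ∈ Finset.Ico (2^i) (2^(i+1)), cr k = ∑ x ∈ Ki, ∑ y ∈ Ki,
        (if G.dist o x = k ∧ G.dist o y = k+1 then μ x y else 0) := by
      intro k hk
      simp only [Finset.mem_Ico] at hk
      refine (cr_ext G μ o k ((hBall (k+1)).toFinset) Ki (hcrmem k) ?_).symm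
      intro x hx
      rw [hKimem]
      rw [hcrmem] at hx
      omega
    rw [Finset.sum_congr rfl h2]
    have h1 := crsum_le_wvol G μ o hnonneg hμadj hdadj (2^i) (2^(i+1)) (2^(i+1)-1)
      (by omega) Ki (fun x hx => (hKimem x).2 (by omega))
    refine h1.trans ?_
    have hNle : N ≤ 2^(i+1) - 1 := by
      have hNA : N ≤ A := le_trans (le_max_right r₀ N) (le_max_left _ 2)
      have : 2^i < 2^(i+1) := by
        have := Nat.pow_lt_pow_right (by norm_num : 1 < 2) (Nat.lt_succ_self i)
        omega
      omega
    have hWb := hW (2^(i+1)-1) hNle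
    refine hWb.trans ?_
    have hone : (1:ℕ) ≤ 2^(i+1) - 1 := by
      have hA2 : 2 ≤ A := le_max_right _ _
      omega
    have hcast : ((2^(i+1) - 1 : ℕ) : ℝ) ≤ (2:ℝ)^(i+1) := by
      have h' : ((2^(i+1)-1 : ℕ):ℝ) ≤ ((2^(i+1):ℕ):ℝ) := Nat.cast_le.2 (by omega)
      rw [Nat.cast_pow, Nat.cast_ofNat] at h'
      exact h'
    have honeR : (1:ℝ) ≤ ((2^(i+1) - 1 : ℕ) : ℝ) := by exact_mod_cast hone
    have hlog : Real.log ((2^(i+1)-1 : ℕ):ℝ) ≤ ((i:ℝ)+1) * Real.log 2 := by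
      have := Real.log_le_log (by linarith) hcast
      rw [Real.log_pow] at this
      push_cast at this
      exact this
    have f1 : ((2^(i+1)-1:ℕ):ℝ)^m ≤ ((2:ℝ)^(i+1))^m :=
      Real.rpow_le_rpow (by linarith) hcast (by linarith)
    have f2 : (Real.log ((2^(i+1)-1:ℕ):ℝ))^(m-1) ≤ (((i:ℝ)+1) * Real.log 2)^(m-1) :=
      Real.rpow_le_rpow (Real.log_nonneg honeR) hlog (by linarith)
    have hnn1 : (0:ℝ) ≤ (Real.log ((2^(i+1)-1:ℕ):ℝ))^(m-1) :=
      Real.rpow_nonneg (Real.log_nonneg honeR) _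
    have hnn2 : (0:ℝ) ≤ C * ((2:ℝ)^(i+1))^m := by positivity
    calc C * ((2^(i+1)-1:ℕ):ℝ)^m * (Real.log ((2^(i+1)-1:ℕ):ℝ))^(m-1)
        ≤ C * ((2:ℝ)^(i+1))^m * (Real.log ((2^(i+1)-1:ℕ):ℝ))^(m-1) := by
          apply mul_le_mul_of_nonneg_right _ hnn1
          exact mul_le_mul_of_nonneg_left f1 hC.le
      _ ≤ C * ((2:ℝ)^(i+1))^m * (((i:ℝ)+1) * Real.log 2)^(m-1) :=
          mul_le_mul_of_nonneg_left f2 hnn2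
  have hTi : ∀ i : ℕ, A ≤ 2^i → κ * (((i:ℝ)+1))⁻¹ ≤ ∑ k ∈ Finset.Ico (2^i) (2^(i+1)), v k := by
    intro i hi
    have hcard : 0 < (Finset.Ico (2^i) (2^(i+1))).card := by
      rw [Nat.card_Ico]
      have : 2^i < 2^(i+1) := by
        have := Nat.pow_lt_pow_right (by norm_num : 1 < 2) (Nat.lt_succ_self i)
        omega
      omega
    have hVb : (0:ℝ) < C * ((2:ℝ)^(i+1))^m * ((((i:ℝ))+1) * Real.log 2)^(m-1) := by
      have := hl2
      positivity
    have hJB := jensen_block hα (Finset.Ico (2^i) (2^(i+1))) hcard cr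
      (fun k _ => hcrpos k) _ hVb (hVi i hi)
    have hcardval : (((Finset.Ico (2^i) (2^(i+1))).card : ℕ) : ℝ) = (2:ℝ)^i := by
      rw [Nat.card_Ico]
      have h2 : 2^(i+1) - 2^i = 2^i := by
        rw [pow_succ]; omega
      rw [h2]
      push_cast
      ring
    rw [hcardval] at hJB
    have hEi := Ei_eq hα hαm hC i
    have hre : (2:ℝ)^i * (1+α) / 2 * (2 * (α/(1+α)) *
          (C * ((2:ℝ)^(i+1))^m * ((((i:ℝ))+1) * Real.log 2)^(m-1)) / ((2:ℝ)^i))^(-α)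
        = (2:ℝ)^i * (1+α)/2 *
          ((2*(α/(1+α))*C) * ((2:ℝ)^(i+1))^m * (((i:ℝ)+1) * Real.log 2)^(m-1)
            / ((2:ℝ)^i))^(-α) := by
      congr 2
      ring
    rw [hre, hEi, ← hκdef] at hJB
    exact hJB
  -- S grows at least like the harmonic series
  have hS0 : ∀ J, 0 ≤ S J := by
    intro J
    rw [hSdef]
    exact Finset.sum_nonneg (fun k _ => (hv k).le)
  have hSlow : ∀ J : ℕ, κ * (∑ i ∈ Finset.Ico A J, (((i:ℝ))+1)⁻¹) ≤ S J := by
    intro J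
    induction J with
    | zero =>
      rw [show Finset.Ico A 0 = ∅ from Finset.Ico_eq_empty (by omega), Finset.sum_empty,
        mul_zero]
      exact hS0 0
    | succ J ih =>
      rcases lt_or_ge J A with hJA | hJA
      · rw [show Finset.Ico A (J+1) = ∅ from Finset.Ico_eq_empty (by omega),
          Finset.sum_empty, mul_zero]
        exact hS0 (J+1)
      · have hA2J : A ≤ 2^J := le_trans hJA (Nat.lt_two_pow_self (n := J)).le
        have h2J : (2:ℕ)^J ≤ 2^(J+1) := Nat.pow_le_pow_right (by norm_num) (by omega)
        have hsplit : S (J+1) = S J + ∑ k ∈ Finset.Ico (2^J) (2^(J+1)), v k := by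
          rw [hSdef]
          simp only []
          rw [← Finset.sum_Ico_consecutive _ hA2J h2J]
        rw [Finset.sum_Ico_succ_top hJA, hsplit, mul_add]
        exact add_le_add ih (hTi J hA2J)
  -- S J is bounded above, contradiction with divergence
  set B0 : ℝ := (2*c7/ε)^α with hB0def
  have hbound : ∀ J : ℕ, A < 2^J → S J ≤ B0 := by
    intro J hAJ
    have h1 := hmain J hAJ
    have hSpos : 0 < S J := by
      rw [hSdef]
      exact Finset.sum_pos (fun k _ => hv k) ⟨A, Finset.mem_Ico.2 ⟨le_rfl, hAJ⟩⟩
    have hSm1 : 0 < (S J)^(m-1) := Real.rpow_pos_of_pos hSpos _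
    have h2 : (S J)^(1-m) = ((S J)^(m-1))⁻¹ := by
      rw [show (1-m) = -(m-1) by ring, Real.rpow_neg hSpos.le]
    rw [h2] at h1
    have h3 : ε * (S J)^(m-1) ≤ 2*c7 := by
      have h := mul_le_mul_of_nonneg_right h1 hSm1.le
      have e : (2*c7*((S J)^(m-1))⁻¹) * (S J)^(m-1) = 2*c7 := by
        field_simp
      rw [e] at h
      exact h
    have h4 : (S J)^(m-1) ≤ 2*c7/ε := (le_div_iff₀' hε).2 (by linarith)
    have h5 : ((S J)^(m-1))^α ≤ B0 :=
      Real.rpow_le_rpow hSm1.le h4 hα.le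
    rw [← Real.rpow_mul hSpos.le] at h5
    have e : (m-1)*α = 1 := by linear_combination hαm
    rw [e, Real.rpow_one] at h5
    exact h5
  -- divergence of the harmonic series
  have hharm : Filter.Tendsto (fun J : ℕ => ∑ i ∈ Finset.Ico A J, (((i:ℝ))+1)⁻¹)
      Filter.atTop Filter.atTop := by
    have hh := Real.tendsto_sum_range_one_div_nat_succ_atTop
    have heq : ∀ J : ℕ, A ≤ J → ∑ i ∈ Finset.Ico A J, (((i:ℝ))+1)⁻¹
        = (∑ i ∈ Finset.range J, (1:ℝ)/(i+1)) - ∑ i ∈ Finset.range A, (1:ℝ)/(i+1) := by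
      intro J hJ
      rw [Finset.sum_Ico_eq_sub _ hJ]
      congr 1 <;> exact Finset.sum_congr rfl (fun i _ => by rw [one_div])
    have h2 : Filter.Tendsto (fun J : ℕ => (∑ i ∈ Finset.range J, (1:ℝ)/(i+1))
        - ∑ i ∈ Finset.range A, (1:ℝ)/(i+1)) Filter.atTop Filter.atTop :=
      Filter.tendsto_atTop_add_const_right _ _ hh
    apply h2.congr'
    filter_upwards [Filter.eventually_ge_atTop A] with J hJ
    rw [heq J hJ]
  have hdiv : Filter.Tendsto (fun J : ℕ => κ * ∑ i ∈ Finset.Ico A J, (((i:ℝ))+1)⁻¹)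
      Filter.atTop Filter.atTop := by
    exact Filter.Tendsto.const_mul_atTop hκ hharm
  obtain ⟨J, hJ1, hJ2⟩ := ((hdiv.eventually_gt_atTop B0).and
    (Filter.eventually_ge_atTop (A+1))).exists
  have hAJ : A < 2^J := lt_of_lt_of_le (by omega : A < A + 1)
    (le_trans hJ2 (Nat.lt_two_pow_self (n := J)).le)
  have := (hbound J hAJ).trans_lt (lt_of_lt_of_le hJ1 (hSlow J))
  exact absurd this (lt_irrefl _)
end

section
/- Let (V,E,μ) be an infinite, connected, locally finite weighted graph satisfying condition (p₀) with constant p₀>1, let m>1, fix o∈V, and suppose either (i) p+q = m−1 with p ≥ 0 and q > 0 (region G₅.₁), or (ii) p+q = m−1 with q < 0 and 1 < m < 3 (region G₅.₂ with 1<m<3). Then there exists κ₀>0, depending only on m, p, q and p₀, with the following property: if there exist κ∈(0,κ₀), C>0 and N∈ℕ such that W_o(n) ≤ C·e^{κ n} for all n ≥ N, then every positive solution of (★) on V is constant; i.e., (★) admits no nontrivial positive solution. -/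
variable {V : Type*}

namespace Helper8

noncomputable def nbr (G : SimpleGraph V) (hlf : ∀ x, (G.neighborSet x).Finite) (x : V) :
    Finset V := (hlf x).toFinset

lemma mem_nbr {G : SimpleGraph V} (hlf : ∀ x, (G.neighborSet x).Finite) {x y : V} :
    y ∈ nbr G hlf x ↔ G.Adj x y := by
  simp [nbr, SimpleGraph.mem_neighborSet]

section basic

variable {G : SimpleGraph V} {μ : V → V → ℝ}

lemma mu_zero (hnonneg : ∀ x y, 0 ≤ μ x y) (hadj : ∀ x y, 0 < μ x y ↔ G.Adj x y)
    (x y : V) (h : ¬ G.Adj x y) : μ x y = 0 := by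
  rcases (hnonneg x y).lt_or_eq with h' | h'
  · exact absurd ((hadj x y).1 h') h
  · exact h'.symm

lemma mu_ne_zero_iff (hnonneg : ∀ x y, 0 ≤ μ x y) (hadj : ∀ x y, 0 < μ x y ↔ G.Adj x y)
    (x y : V) : μ x y ≠ 0 ↔ G.Adj x y := by
  constructor
  · intro h
    by_contra hc
    exact h (mu_zero hnonneg hadj x y hc)
  · intro h
    exact ne_of_gt ((hadj x y).2 h)

lemma vMeasure_eq (hnonneg : ∀ x y, 0 ≤ μ x y) (hadj : ∀ x y, 0 < μ x y ↔ G.Adj x y)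
    (hlf : ∀ x, (G.neighborSet x).Finite) (x : V) :
    vMeasure μ x = ∑ y ∈ nbr G hlf x, μ x y := by
  apply finsum_eq_finset_sum_of_support_subset
  intro y hy
  simp only [Function.mem_support] at hy
  simpa [mem_nbr hlf] using (mu_ne_zero_iff hnonneg hadj x y).1 hy

lemma vMeasure_pos (hnonneg : ∀ x y, 0 ≤ μ x y) (hadj : ∀ x y, 0 < μ x y ↔ G.Adj x y)
    (hlf : ∀ x, (G.neighborSet x).Finite) (x : V) (hx : ∃ y, G.Adj x y) :
    0 < vMeasure μ x := by
  obtain ⟨y, hy⟩ := hx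
  rw [vMeasure_eq hnonneg hadj hlf x]
  apply Finset.sum_pos' (fun z _ => hnonneg x z)
  exact ⟨y, (mem_nbr hlf).2 hy, (hadj x y).2 hy⟩

lemma mu_le_vMeasure (hnonneg : ∀ x y, 0 ≤ μ x y) (hadj : ∀ x y, 0 < μ x y ↔ G.Adj x y)
    (hlf : ∀ x, (G.neighborSet x).Finite) (x y : V) : μ x y ≤ vMeasure μ x := by
  rw [vMeasure_eq hnonneg hadj hlf x]
  by_cases h : G.Adj x y
  · exact Finset.single_le_sum (fun z _ => hnonneg x z) ((mem_nbr hlf).2 h)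
  · rw [mu_zero hnonneg hadj x y h]
    exact Finset.sum_nonneg (fun z _ => hnonneg x z)

end basic

section graph

variable {G : SimpleGraph V}

lemma exists_adj (hinf : Infinite V) (hconn : G.Connected) (x : V) : ∃ y, G.Adj x y := by
  obtain ⟨z, hz⟩ := exists_ne x
  obtain ⟨w⟩ := hconn x z
  cases w with
  | nil => exact absurd rfl hz.symm
  | cons h _ => exact ⟨_, h⟩

lemma exists_pred (hconn : G.Connected) (o z : V) {n : ℕ} (h : G.dist o z = n + 1) :
    ∃ y, G.Adj y z ∧ G.dist o y = n := by
  obtain ⟨w, hw⟩ := (hconn o z).exists_walk_length_eq_dist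
  have hwr : w.reverse.length = n + 1 := by rw [SimpleGraph.Walk.length_reverse, hw, h]
  cases hrev : w.reverse with
  | nil => rw [hrev] at hwr; simp at hwr
  | cons hadj q =>
    rename_i y
    rw [hrev] at hwr
    simp only [SimpleGraph.Walk.length_cons, Nat.add_right_cancel_iff] at hwr
    refine ⟨y, hadj.symm, ?_⟩
    have h1 : G.dist o y ≤ n := by
      have := SimpleGraph.dist_le q.reverse
      rwa [SimpleGraph.Walk.length_reverse, hwr] at this
    have h2 : G.dist o z ≤ G.dist o y + 1 := by
      have ht := hconn.dist_triangle (u := o) (v := y) (w := z)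
      have : G.dist y z ≤ 1 := (SimpleGraph.dist_eq_one_iff_adj.2 hadj.symm).le
      omega
    omega

lemma ball_finite (hconn : G.Connected) (hlf : ∀ x, (G.neighborSet x).Finite) (o : V) :
    ∀ n : ℕ, {z : V | G.dist o z ≤ n}.Finite := by
  intro n
  induction n with
  | zero =>
    apply Set.Finite.subset (Set.finite_singleton o)
    intro z hz
    simp only [Set.mem_setOf_eq, Nat.le_zero] at hz
    simp [(hconn.dist_eq_zero_iff.1 hz).symm]
  | succ n ih =>
    apply Set.Finite.subset (ih.union (ih.biUnion (fun x _ => hlf x)))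
    intro z hz
    simp only [Set.mem_setOf_eq] at hz
    rcases Nat.lt_or_ge (G.dist o z) (n+1) with h | h
    · exact Or.inl (by simpa using Nat.lt_succ_iff.1 h)
    · have hd : G.dist o z = n + 1 := le_antisymm hz h
      obtain ⟨y, hy, hyd⟩ := exists_pred hconn o z hd
      have hy1 : y ∈ {z : V | G.dist o z ≤ n} := by simp [hyd]
      have hy2 : z ∈ G.neighborSet y := hy
      exact Or.inr (Set.mem_biUnion hy1 hy2)

end graph


section flux

variable {G : SimpleGraph V} {μ : V → V → ℝ}

noncomputable def outF (hlf : ∀ x, (G.neighborSet x).Finite) (μ : V → V → ℝ) (u : V → ℝ)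
    (m : ℝ) (z : V) : ℝ :=
  ∑ y ∈ nbr G hlf z, μ z y * (max (u z - u y) 0) ^ (m - 1)

noncomputable def innF (hlf : ∀ x, (G.neighborSet x).Finite) (μ : V → V → ℝ) (u : V → ℝ)
    (m : ℝ) (z : V) : ℝ :=
  ∑ y ∈ nbr G hlf z, μ z y * (max (u y - u z) 0) ^ (m - 1)

lemma outF_nonneg (hlf : ∀ x, (G.neighborSet x).Finite) (hnonneg : ∀ x y, 0 ≤ μ x y)
    (u : V → ℝ) (m : ℝ) (z : V) : 0 ≤ outF hlf μ u m z :=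
  Finset.sum_nonneg fun y _ => mul_nonneg (hnonneg z y) (Real.rpow_nonneg (le_max_right _ _) _)

lemma innF_nonneg (hlf : ∀ x, (G.neighborSet x).Finite) (hnonneg : ∀ x y, 0 ≤ μ x y)
    (u : V → ℝ) (m : ℝ) (z : V) : 0 ≤ innF hlf μ u m z :=
  Finset.sum_nonneg fun y _ => mul_nonneg (hnonneg z y) (Real.rpow_nonneg (le_max_right _ _) _)

lemma term_identity {m : ℝ} (hm : m ≠ 1) (a t : ℝ) :
    a * |t| ^ (m - 2) * t = a * (max t 0) ^ (m - 1) - a * (max (-t) 0) ^ (m - 1) := by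
  have hm1 : m - 1 ≠ 0 := sub_ne_zero.2 hm
  rcases lt_trichotomy t 0 with ht | ht | ht
  · have habs : |t| = -t := abs_of_neg ht
    have h1 : max t 0 = 0 := max_eq_right ht.le
    have h2 : max (-t) 0 = -t := max_eq_left (by linarith)
    rw [habs, h1, h2, Real.zero_rpow hm1]
    have hpos : (0:ℝ) < -t := by linarith
    have : (-t) ^ (m - 1) = (-t) ^ (m - 2) * (-t) := by
      rw [show m - 1 = (m - 2) + 1 by ring, Real.rpow_add hpos, Real.rpow_one]
    rw [this]; ring
  · simp [ht, Real.zero_rpow hm1]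
  · have habs : |t| = t := abs_of_pos ht
    have h1 : max t 0 = t := max_eq_left ht.le
    have h2 : max (-t) 0 = 0 := max_eq_right (by linarith)
    rw [habs, h1, h2, Real.zero_rpow hm1]
    have : t ^ (m - 1) = t ^ (m - 2) * t := by
      rw [show m - 1 = (m - 2) + 1 by ring, Real.rpow_add ht, Real.rpow_one]
    rw [this]; ring

lemma lap_sum_eq (hnonneg : ∀ x y, 0 ≤ μ x y) (hadj : ∀ x y, 0 < μ x y ↔ G.Adj x y)
    (hlf : ∀ x, (G.neighborSet x).Finite) (u : V → ℝ) {m : ℝ} (hm : m ≠ 1) (z : V) :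
    ∑ᶠ y, μ z y * |u y - u z| ^ (m - 2) * (u y - u z)
      = innF hlf μ u m z - outF hlf μ u m z := by
  have hsupp : Function.support (fun y => μ z y * |u y - u z| ^ (m - 2) * (u y - u z))
      ⊆ (nbr G hlf z : Set V) := by
    intro y hy
    simp only [Function.mem_support] at hy
    have : μ z y ≠ 0 := by
      intro h0; apply hy; rw [h0]; ring
    simpa [mem_nbr hlf] using (mu_ne_zero_iff hnonneg hadj z y).1 this
  rw [finsum_eq_finset_sum_of_support_subset _ hsupp, innF, outF, ← Finset.sum_sub_distrib]
  apply Finset.sum_congr rfl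
  intro y _
  have := term_identity hm (μ z y) (u y - u z)
  rw [this, neg_sub]

lemma eq_main (hnonneg : ∀ x y, 0 ≤ μ x y) (hadj : ∀ x y, 0 < μ x y ↔ G.Adj x y)
    (hlf : ∀ x, (G.neighborSet x).Finite) (u : V → ℝ) {m p q : ℝ} (hm : m ≠ 1) (z : V)
    (hvz : 0 < vMeasure μ z)
    (hineq : lapM μ m u z + u z ^ p * gradNorm μ u z ^ q ≤ 0) :
    innF hlf μ u m z + vMeasure μ z * (u z ^ p * gradNorm μ u z ^ q)
      ≤ outF hlf μ u m z := by
  have hlap : lapM μ m u z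
      = (vMeasure μ z)⁻¹ * (innF hlf μ u m z - outF hlf μ u m z) := by
    rw [lapM, lap_sum_eq hnonneg hadj hlf u hm z]
  rw [hlap] at hineq
  have h2 : (vMeasure μ z)⁻¹ * (innF hlf μ u m z - outF hlf μ u m z)
      ≤ - (u z ^ p * gradNorm μ u z ^ q) := by linarith
  have h3 := mul_le_mul_of_nonneg_left h2 hvz.le
  rw [← mul_assoc, mul_inv_cancel₀ hvz.ne', one_mul] at h3
  linarith

lemma grad_sq (hnonneg : ∀ x y, 0 ≤ μ x y) (hadj : ∀ x y, 0 < μ x y ↔ G.Adj x y)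
    (hlf : ∀ x, (G.neighborSet x).Finite) (u : V → ℝ) (z : V) (hvz : 0 < vMeasure μ z) :
    gradNorm μ u z ^ (2:ℕ)
      = ∑ y ∈ nbr G hlf z, μ z y / (2 * vMeasure μ z) * (u y - u z) ^ 2 := by
  have hsupp : Function.support (fun y => μ z y / (2 * vMeasure μ z) * (u y - u z) ^ 2)
      ⊆ (nbr G hlf z : Set V) := by
    intro y hy
    simp only [Function.mem_support] at hy
    have : μ z y ≠ 0 := by
      intro h0; apply hy; rw [h0]; simp
    simpa [mem_nbr hlf] using (mu_ne_zero_iff hnonneg hadj z y).1 this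
  have hs : ∑ᶠ y, μ z y / (2 * vMeasure μ z) * (u y - u z) ^ 2
      = ∑ y ∈ nbr G hlf z, μ z y / (2 * vMeasure μ z) * (u y - u z) ^ 2 :=
    finsum_eq_finset_sum_of_support_subset _ hsupp
  have hnn : 0 ≤ ∑ y ∈ nbr G hlf z, μ z y / (2 * vMeasure μ z) * (u y - u z) ^ 2 :=
    Finset.sum_nonneg fun y _ =>
      mul_nonneg (div_nonneg (hnonneg z y) (by linarith)) (sq_nonneg _)
  rw [gradNorm, hs, Real.sq_sqrt hnn]

lemma grad_ge (hnonneg : ∀ x y, 0 ≤ μ x y) (hadj : ∀ x y, 0 < μ x y ↔ G.Adj x y)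
    (hlf : ∀ x, (G.neighborSet x).Finite) {p₀ : ℝ} (hp₀ : 1 < p₀)
    (hcond : ∀ x y, G.Adj x y → 1 / p₀ ≤ μ x y / vMeasure μ x)
    (u : V → ℝ) (z y : V) (hzy : G.Adj z y) (hvz : 0 < vMeasure μ z) :
    Real.sqrt (1 / (2 * p₀)) * |u y - u z| ≤ gradNorm μ u z := by
  have hterm : (1 / (2 * p₀)) * (u y - u z) ^ 2
      ≤ ∑ w ∈ nbr G hlf z, μ z w / (2 * vMeasure μ z) * (u w - u z) ^ 2 := by
    have h1 : (1 / (2 * p₀)) * (u y - u z) ^ 2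
        ≤ μ z y / (2 * vMeasure μ z) * (u y - u z) ^ 2 := by
      apply mul_le_mul_of_nonneg_right _ (sq_nonneg _)
      have := hcond z y hzy
      rw [div_le_div_iff₀ (by linarith) (by linarith)] at this ⊢
      · nlinarith
    refine le_trans h1 (Finset.single_le_sum
      (f := fun w => μ z w / (2 * vMeasure μ z) * (u w - u z) ^ 2) ?_ ((mem_nbr hlf).2 hzy))
    intro w _
    exact mul_nonneg (div_nonneg (hnonneg z w) (by linarith)) (sq_nonneg _)
  have := Real.sqrt_le_sqrt hterm
  rw [← grad_sq hnonneg hadj hlf u z hvz] at this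
  rw [Real.sqrt_mul (by positivity), Real.sqrt_sq_eq_abs] at this
  calc Real.sqrt (1 / (2 * p₀)) * |u y - u z| ≤ Real.sqrt (gradNorm μ u z ^ (2:ℕ)) := this
    _ = |gradNorm μ u z| := Real.sqrt_sq_eq_abs _
    _ = gradNorm μ u z := abs_of_nonneg (Real.sqrt_nonneg _)

lemma grad_le (hnonneg : ∀ x y, 0 ≤ μ x y) (hadj : ∀ x y, 0 < μ x y ↔ G.Adj x y)
    (hlf : ∀ x, (G.neighborSet x).Finite) (u : V → ℝ) (z : V) (hvz : 0 < vMeasure μ z)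
    {K : ℝ} (hK : 0 ≤ K) (hb : ∀ y, G.Adj z y → |u y - u z| ≤ K) :
    gradNorm μ u z ≤ K := by
  have hsum : ∑ y ∈ nbr G hlf z, μ z y / (2 * vMeasure μ z) * (u y - u z) ^ 2 ≤ K ^ 2 := by
    have h1 : ∀ y ∈ nbr G hlf z,
        μ z y / (2 * vMeasure μ z) * (u y - u z) ^ 2
          ≤ μ z y / (2 * vMeasure μ z) * K ^ 2 := by
      intro y hy
      apply mul_le_mul_of_nonneg_left _ (div_nonneg (hnonneg z y) (by linarith))
      have := hb y ((mem_nbr hlf).1 hy)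
      calc (u y - u z) ^ 2 = |u y - u z| ^ 2 := (sq_abs _).symm
        _ ≤ K ^ 2 := by nlinarith [abs_nonneg (u y - u z)]
    calc ∑ y ∈ nbr G hlf z, μ z y / (2 * vMeasure μ z) * (u y - u z) ^ 2
        ≤ ∑ y ∈ nbr G hlf z, μ z y / (2 * vMeasure μ z) * K ^ 2 := Finset.sum_le_sum h1
      _ = (∑ y ∈ nbr G hlf z, μ z y) / (2 * vMeasure μ z) * K ^ 2 := by
          rw [Finset.sum_div, Finset.sum_mul]
      _ = vMeasure μ z / (2 * vMeasure μ z) * K ^ 2 := by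
          rw [← vMeasure_eq hnonneg hadj hlf z]
      _ ≤ 1 * K ^ 2 := by
          apply mul_le_mul_of_nonneg_right _ (sq_nonneg _)
          rw [div_le_one (by linarith)]; linarith
      _ = K ^ 2 := one_mul _
  have h2 : gradNorm μ u z ^ (2:ℕ) ≤ K ^ 2 := by
    rw [grad_sq hnonneg hadj hlf u z hvz]; exact hsum
  nlinarith [Real.sqrt_nonneg (∑ᶠ y, μ z y / (2 * vMeasure μ z) * (u y - u z) ^ 2),
    (rfl : gradNorm μ u z = gradNorm μ u z)]

end flux

section core

variable {G : SimpleGraph V} {μ : V → V → ℝ}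

/-- Edge Harnack inequality. -/
lemma harnack (hnonneg : ∀ x y, 0 ≤ μ x y) (hadj : ∀ x y, 0 < μ x y ↔ G.Adj x y)
    (hlf : ∀ x, (G.neighborSet x).Finite) {p₀ : ℝ} (hp₀ : 1 < p₀)
    (hcond : ∀ x y, G.Adj x y → 1 / p₀ ≤ μ x y / vMeasure μ x)
    (u : V → ℝ) (hu : ∀ x, 0 < u x) {m p q : ℝ} (hm : 1 < m)
    (z : V) (hvz : 0 < vMeasure μ z)
    (hineq : lapM μ m u z + u z ^ p * gradNorm μ u z ^ q ≤ 0)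
    (y : V) (hzy : G.Adj z y) :
    u y - u z ≤ p₀ ^ (1 / (m - 1)) * u z := by
  have hm1 : (0:ℝ) < m - 1 := by linarith
  have hbge : (0:ℝ) ≤ u z ^ p * gradNorm μ u z ^ q :=
    mul_nonneg (Real.rpow_nonneg (hu z).le p) (Real.rpow_nonneg (Real.sqrt_nonneg _) q)
  have hio : innF hlf μ u m z ≤ outF hlf μ u m z := by
    have := eq_main hnonneg hadj hlf u (by linarith : m ≠ 1) z hvz hineq
    nlinarith [mul_nonneg hvz.le hbge]
  have hout : outF hlf μ u m z ≤ vMeasure μ z * u z ^ (m - 1) := by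
    have h1 : ∀ w ∈ nbr G hlf z,
        μ z w * (max (u z - u w) 0) ^ (m - 1) ≤ μ z w * u z ^ (m - 1) := by
      intro w _
      apply mul_le_mul_of_nonneg_left _ (hnonneg z w)
      apply Real.rpow_le_rpow (le_max_right _ _) _ hm1.le
      exact max_le (by linarith [hu w]) (hu z).le
    calc outF hlf μ u m z ≤ ∑ w ∈ nbr G hlf z, μ z w * u z ^ (m - 1) :=
          Finset.sum_le_sum h1
      _ = vMeasure μ z * u z ^ (m - 1) := by
          rw [← Finset.sum_mul, ← vMeasure_eq hnonneg hadj hlf z]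
  have hsingle : μ z y * (max (u y - u z) 0) ^ (m - 1) ≤ vMeasure μ z * u z ^ (m - 1) := by
    refine le_trans (le_trans ?_ hio) hout
    refine Finset.single_le_sum
      (f := fun w => μ z w * (max (u w - u z) 0) ^ (m - 1)) ?_ ((mem_nbr hlf).2 hzy)
    intro w _
    exact mul_nonneg (hnonneg z w) (Real.rpow_nonneg (le_max_right _ _) _)
  have hμpos : 0 < μ z y := (hadj z y).2 hzy
  have hvp : vMeasure μ z ≤ p₀ * μ z y := by
    have := hcond z y hzy
    rw [div_le_div_iff₀ (by linarith) hvz] at this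
    nlinarith
  have hkey : (max (u y - u z) 0) ^ (m - 1) ≤ (p₀ ^ (1 / (m - 1)) * u z) ^ (m - 1) := by
    have hrw : (p₀ ^ (1 / (m - 1)) * u z) ^ (m - 1)
        = p₀ * u z ^ (m - 1) := by
      rw [Real.mul_rpow (Real.rpow_nonneg (by linarith) _) (hu z).le,
        ← Real.rpow_mul (by linarith : (0:ℝ) ≤ p₀)]
      rw [one_div, inv_mul_cancel₀ hm1.ne', Real.rpow_one]
    rw [hrw]
    have h2 : μ z y * (max (u y - u z) 0) ^ (m - 1) ≤ μ z y * (p₀ * u z ^ (m - 1)) := by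
      calc μ z y * (max (u y - u z) 0) ^ (m - 1) ≤ vMeasure μ z * u z ^ (m - 1) := hsingle
        _ ≤ (p₀ * μ z y) * u z ^ (m - 1) := by
            apply mul_le_mul_of_nonneg_right hvp (Real.rpow_nonneg (hu z).le _)
        _ = μ z y * (p₀ * u z ^ (m - 1)) := by ring
    exact le_of_mul_le_mul_left h2 hμpos
  have := (Real.rpow_le_rpow_iff (le_max_right _ _)
    (mul_nonneg (Real.rpow_nonneg (by linarith) _) (hu z).le) hm1).1 hkey
  exact le_trans (le_max_left _ _) this

/-- The core boost estimate. -/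
lemma boost (hnonneg : ∀ x y, 0 ≤ μ x y) (hadj : ∀ x y, 0 < μ x y ↔ G.Adj x y)
    (hlf : ∀ x, (G.neighborSet x).Finite) {p₀ : ℝ} (hp₀ : 1 < p₀)
    (hcond : ∀ x y, G.Adj x y → 1 / p₀ ≤ μ x y / vMeasure μ x)
    (u : V → ℝ) (hu : ∀ x, 0 < u x) {m p q : ℝ} (hm : 1 < m)
    (hpq : p + q = m - 1) (hreg : (0 ≤ p ∧ 0 < q) ∨ (q < 0 ∧ m < 3))
    (hgrad : ∀ x, q < 0 → 0 < gradNorm μ u x)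
    (hineq : ∀ x, lapM μ m u x + u x ^ p * gradNorm μ u x ^ q ≤ 0)
    (z : V) (hvz : 0 < vMeasure μ z) (hnbz : ∃ y, G.Adj z y) :
    min (min (Real.sqrt (1 / (2 * p₀)) ^ q) ((p₀ ^ (1 / (m - 1))) ^ q)) (1/2)
        * outF hlf μ u m z
      ≤ vMeasure μ z * (u z ^ p * gradNorm μ u z ^ q) := by
  set c8 := min (min (Real.sqrt (1 / (2 * p₀)) ^ q) ((p₀ ^ (1 / (m - 1))) ^ q)) (1/2) with hc8
  have hm1 : (0:ℝ) < m - 1 := by linarith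
  have hcs : (0:ℝ) < Real.sqrt (1 / (2 * p₀)) := Real.sqrt_pos.2 (by positivity)
  have hBpos : (0:ℝ) < p₀ ^ (1 / (m - 1)) := Real.rpow_pos_of_pos (by linarith) _
  have hrhs : 0 ≤ vMeasure μ z * (u z ^ p * gradNorm μ u z ^ q) :=
    mul_nonneg hvz.le (mul_nonneg (Real.rpow_nonneg (hu z).le p)
      (Real.rpow_nonneg (Real.sqrt_nonneg _) q))
  -- if no descending neighbor, outF = 0
  by_cases hD : ∀ y ∈ nbr G hlf z, u z - u y ≤ 0
  · have hout0 : outF hlf μ u m z = 0 := by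
      apply Finset.sum_eq_zero
      intro y hy
      rw [max_eq_right (hD y hy), Real.zero_rpow (by linarith : m - 1 ≠ 0), mul_zero]
    rw [hout0, mul_zero]; exact hrhs
  push_neg at hD
  obtain ⟨y₀, hy₀m, hy₀⟩ := hD
  have hne : (nbr G hlf z).Nonempty := ⟨y₀, hy₀m⟩
  obtain ⟨y₁, hy₁m, hy₁max⟩ := Finset.exists_max_image (nbr G hlf z) (fun y => u z - u y) hne
  set D := u z - u y₁ with hDdef
  have hDpos : 0 < D := lt_of_lt_of_le hy₀ (hy₁max y₀ hy₀m)
  have hDle : D ≤ u z := by have := hu y₁; linarith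
  have hout : outF hlf μ u m z ≤ vMeasure μ z * D ^ (m - 1) := by
    have h1 : ∀ w ∈ nbr G hlf z,
        μ z w * (max (u z - u w) 0) ^ (m - 1) ≤ μ z w * D ^ (m - 1) := by
      intro w hw
      apply mul_le_mul_of_nonneg_left _ (hnonneg z w)
      apply Real.rpow_le_rpow (le_max_right _ _) (max_le (hy₁max w hw) hDpos.le) hm1.le
    calc outF hlf μ u m z ≤ ∑ w ∈ nbr G hlf z, μ z w * D ^ (m - 1) := Finset.sum_le_sum h1
      _ = vMeasure μ z * D ^ (m - 1) := by
          rw [← Finset.sum_mul, ← vMeasure_eq hnonneg hadj hlf z]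
  have houtn := outF_nonneg hlf hnonneg u m z
  -- key: c8 * D ^ (m-1) ≤ u z ^ p * gradNorm ^ q
  have hkey : c8 * D ^ (m - 1) ≤ u z ^ p * gradNorm μ u z ^ q := by
    rcases hreg with ⟨hp, hq⟩ | ⟨hq, hm3⟩
    · -- region (i)
      have hgD : Real.sqrt (1 / (2 * p₀)) * D ≤ gradNorm μ u z := by
        have := grad_ge hnonneg hadj hlf hp₀ hcond u z y₁ ((mem_nbr hlf).1 hy₁m) hvz
        have habs : |u y₁ - u z| = D := by
          rw [abs_of_nonpos (by linarith), hDdef]; ring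
        rwa [habs] at this
      have h1 : (Real.sqrt (1 / (2 * p₀)) * D) ^ q ≤ gradNorm μ u z ^ q :=
        Real.rpow_le_rpow (by positivity) hgD hq.le
      have h2 : D ^ p ≤ u z ^ p := Real.rpow_le_rpow hDpos.le hDle hp
      have hsplit : (Real.sqrt (1 / (2 * p₀)) * D) ^ q
          = Real.sqrt (1 / (2 * p₀)) ^ q * D ^ q := Real.mul_rpow hcs.le hDpos.le
      calc c8 * D ^ (m - 1) ≤ Real.sqrt (1 / (2 * p₀)) ^ q * D ^ (m - 1) := by
            apply mul_le_mul_of_nonneg_right _ (Real.rpow_nonneg hDpos.le _)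
            exact le_trans (min_le_left _ _) (min_le_left _ _)
        _ = Real.sqrt (1 / (2 * p₀)) ^ q * (D ^ p * D ^ q) := by
            rw [← Real.rpow_add hDpos, hpq]
        _ = D ^ p * (Real.sqrt (1 / (2 * p₀)) ^ q * D ^ q) := by ring
        _ ≤ u z ^ p * (Real.sqrt (1 / (2 * p₀)) ^ q * D ^ q) := by
            apply mul_le_mul_of_nonneg_right h2
            exact mul_nonneg (Real.rpow_nonneg hcs.le _) (Real.rpow_nonneg hDpos.le _)
        _ = u z ^ p * (Real.sqrt (1 / (2 * p₀)) * D) ^ q := by rw [hsplit]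
        _ ≤ u z ^ p * gradNorm μ u z ^ q := by
            apply mul_le_mul_of_nonneg_left h1 (Real.rpow_nonneg (hu z).le _)
    · -- region (ii)
      set B := p₀ ^ (1 / (m - 1)) with hBdef
      have hB1 : (1:ℝ) ≤ B := Real.one_le_rpow (by linarith) (by positivity)
      have hgle : gradNorm μ u z ≤ B * u z := by
        apply grad_le hnonneg hadj hlf u z hvz (by nlinarith [hu z])
        intro y hzy
        rw [abs_le]
        constructor
        · have := hu y; nlinarith [hu z]
        · exact harnack hnonneg hadj hlf hp₀ hcond u hu hm z hvz (hineq z) y hzy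
      have hgpos := hgrad z hq
      have h1 : (B * u z) ^ q ≤ gradNorm μ u z ^ q :=
        Real.rpow_le_rpow_of_nonpos hgpos hgle hq.le
      have hsplit : (B * u z) ^ q = B ^ q * u z ^ q :=
        Real.mul_rpow (by linarith) (hu z).le
      have hDm : D ^ (m - 1) ≤ u z ^ (m - 1) :=
        Real.rpow_le_rpow hDpos.le hDle hm1.le
      calc c8 * D ^ (m - 1) ≤ B ^ q * D ^ (m - 1) := by
            apply mul_le_mul_of_nonneg_right _ (Real.rpow_nonneg hDpos.le _)
            exact le_trans (min_le_left _ _) (min_le_right _ _)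
        _ ≤ B ^ q * u z ^ (m - 1) := by
            apply mul_le_mul_of_nonneg_left hDm (Real.rpow_nonneg (by linarith) _)
        _ = B ^ q * (u z ^ p * u z ^ q) := by rw [← Real.rpow_add (hu z), hpq]
        _ = u z ^ p * (B ^ q * u z ^ q) := by ring
        _ = u z ^ p * (B * u z) ^ q := by rw [hsplit]
        _ ≤ u z ^ p * gradNorm μ u z ^ q := by
            apply mul_le_mul_of_nonneg_left h1 (Real.rpow_nonneg (hu z).le _)
  have hc8pos : 0 < c8 := by
    apply lt_min (lt_min _ _) (by norm_num)
    · exact Real.rpow_pos_of_pos hcs q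
    · exact Real.rpow_pos_of_pos hBpos q
  calc c8 * outF hlf μ u m z ≤ c8 * (vMeasure μ z * D ^ (m - 1)) :=
        mul_le_mul_of_nonneg_left hout hc8pos.le
    _ = vMeasure μ z * (c8 * D ^ (m - 1)) := by ring
    _ ≤ vMeasure μ z * (u z ^ p * gradNorm μ u z ^ q) :=
        mul_le_mul_of_nonneg_left hkey hvz.le

/-- Truncated amplification: `innF v ≤ (1 - c8) * outF v` for `v = min u c`. -/
lemma trunc_amplify (hnonneg : ∀ x y, 0 ≤ μ x y) (hadj : ∀ x y, 0 < μ x y ↔ G.Adj x y)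
    (hlf : ∀ x, (G.neighborSet x).Finite)
    (u : V → ℝ) (hu : ∀ x, 0 < u x) {m : ℝ} (hm : 1 < m) {c8 : ℝ}
    (hc8a : 0 < c8) (hc8b : c8 ≤ 1/2) {c : ℝ} (hc : 0 < c) (z : V)
    (hEQ : innF hlf μ u m z + c8 * outF hlf μ u m z ≤ outF hlf μ u m z) :
    innF hlf μ (fun x => min (u x) c) m z
      ≤ (1 - c8) * outF hlf μ (fun x => min (u x) c) m z := by
  set v := fun x => min (u x) c with hv
  rcases le_or_gt c (u z) with hzc | hzc
  · have hin0 : innF hlf μ v m z = 0 := by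
      apply Finset.sum_eq_zero
      intro y _
      have hvz : v z = c := min_eq_right hzc
      have : v y - v z ≤ 0 := by
        have : v y ≤ c := min_le_right _ _
        rw [hvz]; linarith
      rw [max_eq_right this, Real.zero_rpow (by linarith : m - 1 ≠ 0), mul_zero]
    rw [hin0]
    exact mul_nonneg (by linarith) (outF_nonneg hlf hnonneg v m z)
  · have hvz : v z = u z := min_eq_left hzc.le
    have houtv : outF hlf μ v m z = outF hlf μ u m z := by
      apply Finset.sum_congr rfl
      intro y _
      congr 2
      rcases le_total (u y) c with h | h
      · rw [hvz, show v y = u y from min_eq_left h]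
      · rw [hvz, show v y = c from min_eq_right h]
        rw [max_eq_right (by linarith), max_eq_right (by linarith)]
    have hinv : innF hlf μ v m z ≤ innF hlf μ u m z := by
      apply Finset.sum_le_sum
      intro y _
      apply mul_le_mul_of_nonneg_left _ (hnonneg z y)
      apply Real.rpow_le_rpow (le_max_right _ _) _ (by linarith)
      apply max_le _ (le_max_right _ _)
      have h1 : v y ≤ u y := min_le_left _ _
      have : v y - v z ≤ u y - u z := by rw [hvz]; linarith
      exact le_trans this (le_max_left _ _)
    rw [houtv]
    linarith

end core

section wvol

open Classical

variable {G : SimpleGraph V} {μ : V → V → ℝ}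

lemma wvol_eq (hconn : G.Connected) (hnonneg : ∀ x y, 0 ≤ μ x y)
    (hadj : ∀ x y, 0 < μ x y ↔ G.Adj x y) (hlf : ∀ x, (G.neighborSet x).Finite)
    (o : V) (n n' : ℕ) (hb : ∀ x, G.dist o x ≤ n → G.dist o x ≤ n') :
    Wvol G μ o n = ∑ x ∈ (ball_finite hconn hlf o n').toFinset, ∑ y ∈ nbr G hlf x,
      (if G.dist o x ≤ n ∧ G.dist o x < G.dist o y then μ x y else 0) := by
  rw [Wvol]
  have hinner : ∀ x : V, (∑ᶠ y, if G.dist o x ≤ n ∧ G.dist o x < G.dist o y then μ x y else 0)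
      = ∑ y ∈ nbr G hlf x, (if G.dist o x ≤ n ∧ G.dist o x < G.dist o y then μ x y else 0) := by
    intro x
    apply finsum_eq_finset_sum_of_support_subset
    intro y hy
    simp only [Function.mem_support] at hy
    have hμ : μ x y ≠ 0 := by
      intro h0
      apply hy
      split <;> simp [h0]
    simpa [mem_nbr hlf] using (mu_ne_zero_iff hnonneg hadj x y).1 hμ
  have houter : Function.support (fun x => ∑ᶠ y,
      if G.dist o x ≤ n ∧ G.dist o x < G.dist o y then μ x y else 0)
      ⊆ ((ball_finite hconn hlf o n').toFinset : Set V) := by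
    intro x hx
    simp only [Function.mem_support] at hx
    by_contra hxb
    apply hx
    have hd : ¬ (G.dist o x ≤ n) := by
      intro hle
      apply hxb
      rw [Set.Finite.coe_toFinset]
      exact (hb x hle)
    rw [hinner x]
    apply Finset.sum_eq_zero
    intro y _
    rw [if_neg (fun hcontra => hd hcontra.1)]
  rw [finsum_eq_finset_sum_of_support_subset _ houter]
  exact Finset.sum_congr rfl fun x _ => hinner x

lemma wvol_nonneg (hconn : G.Connected) (hnonneg : ∀ x y, 0 ≤ μ x y)
    (hadj : ∀ x y, 0 < μ x y ↔ G.Adj x y) (hlf : ∀ x, (G.neighborSet x).Finite)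
    (o : V) (n : ℕ) : 0 ≤ Wvol G μ o n := by
  rw [wvol_eq hconn hnonneg hadj hlf o n n (fun x h => h)]
  apply Finset.sum_nonneg
  intro x _
  apply Finset.sum_nonneg
  intro y _
  split
  · exact hnonneg x y
  · exact le_refl 0
  
lemma wvol_mono (hconn : G.Connected) (hnonneg : ∀ x y, 0 ≤ μ x y)
    (hadj : ∀ x y, 0 < μ x y ↔ G.Adj x y) (hlf : ∀ x, (G.neighborSet x).Finite)
    (o : V) (n : ℕ) : Wvol G μ o n ≤ Wvol G μ o (n + 1) := by
  rw [wvol_eq hconn hnonneg hadj hlf o n (n+1) (fun x h => by omega),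
    wvol_eq hconn hnonneg hadj hlf o (n+1) (n+1) (fun x h => h)]
  apply Finset.sum_le_sum
  intro x _
  apply Finset.sum_le_sum
  intro y _
  by_cases h : G.dist o x ≤ n ∧ G.dist o x < G.dist o y
  · rw [if_pos h, if_pos ⟨by omega, h.2⟩]
  · rw [if_neg h]
    split
    · exact hnonneg x y
    · exact le_refl 0

lemma sphere_bound (hsymm : ∀ x y, μ x y = μ y x) (hnonneg : ∀ x y, 0 ≤ μ x y)
    (hadj : ∀ x y, 0 < μ x y ↔ G.Adj x y) (hconn : G.Connected)
    (hlf : ∀ x, (G.neighborSet x).Finite) {p₀ : ℝ} (hp₀ : 1 < p₀)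
    (hcond : ∀ x y, G.Adj x y → 1 / p₀ ≤ μ x y / vMeasure μ x)
    (o : V) (k : ℕ) (F : Finset V) (hF : ∀ z ∈ F, G.dist o z = k + 1) :
    ∑ z ∈ F, vMeasure μ z ≤ p₀ * Wvol G μ o k := by
  -- choose predecessors
  have hpred : ∀ z ∈ F, ∃ y, G.Adj y z ∧ G.dist o y = k := fun z hz =>
    exists_pred hconn o z (hF z hz)
  classical
  set f : V → V := fun z => if hz : ∃ y, G.Adj y z ∧ G.dist o y = k then hz.choose else z
    with hfdef
  have hfadj : ∀ z ∈ F, G.Adj (f z) z ∧ G.dist o (f z) = k := by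
    intro z hz
    have h := hpred z hz
    rw [hfdef]
    simp only [dif_pos h]
    exact h.choose_spec
  have hstep1 : ∑ z ∈ F, vMeasure μ z ≤ ∑ z ∈ F, p₀ * μ (f z) z := by
    apply Finset.sum_le_sum
    intro z hz
    have hzadj : G.Adj z (f z) := (hfadj z hz).1.symm
    have hvz : 0 < vMeasure μ z :=
      vMeasure_pos hnonneg hadj hlf z ⟨f z, hzadj⟩
    have := hcond z (f z) hzadj
    rw [div_le_div_iff₀ (by linarith) hvz] at this
    rw [hsymm (f z) z]
    nlinarith
  rw [← Finset.mul_sum] at hstep1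
  have hstep2 : ∑ z ∈ F, μ (f z) z ≤ Wvol G μ o k := by
    rw [wvol_eq hconn hnonneg hadj hlf o k k (fun x h => h)]
    have hmapsf : ∀ z ∈ F, f z ∈ (ball_finite hconn hlf o k).toFinset := by
      intro z hz
      simp only [Set.Finite.mem_toFinset, Set.mem_setOf_eq]
      exact (hfadj z hz).2.le
    rw [← Finset.sum_fiberwise_of_maps_to (g := f)
      (t := (ball_finite hconn hlf o k).toFinset) hmapsf (fun z => μ (f z) z)]
    apply Finset.sum_le_sum
    intro x _
    have hsub : F.filter (fun z => f z = x) ⊆ nbr G hlf x := by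
      intro z hz
      simp only [Finset.mem_filter] at hz
      rw [mem_nbr hlf, ← hz.2]
      exact (hfadj z hz.1).1
    calc ∑ z ∈ F.filter (fun z => f z = x), μ (f z) z
        = ∑ z ∈ F.filter (fun z => f z = x),
            (if G.dist o x ≤ k ∧ G.dist o x < G.dist o z then μ x z else 0) := by
          apply Finset.sum_congr rfl
          intro z hz
          simp only [Finset.mem_filter] at hz
          have h1 : f z = x := hz.2
          have h2 := hfadj z hz.1
          have h3 := hF z hz.1
          rw [← h1, if_pos ⟨by omega, by omega⟩]
      _ ≤ ∑ y ∈ nbr G hlf x, (if G.dist o x ≤ k ∧ G.dist o x < G.dist o y then μ x y else 0) := by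
          apply Finset.sum_le_sum_of_subset_of_nonneg hsub
          intro y _ _
          split
          · exact hnonneg x y
          · exact le_refl 0
  calc ∑ z ∈ F, vMeasure μ z ≤ p₀ * ∑ z ∈ F, μ (f z) z := hstep1
    _ ≤ p₀ * Wvol G μ o k := by
        apply mul_le_mul_of_nonneg_left hstep2 (by linarith)

lemma wvol_exp (hconn : G.Connected) (hnonneg : ∀ x y, 0 ≤ μ x y)
    (hadj : ∀ x y, 0 < μ x y ↔ G.Adj x y) (hlf : ∀ x, (G.neighborSet x).Finite)
    (o : V) {κ C : ℝ} {N : ℕ} (hκ : 0 < κ) (hC : 0 < C)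
    (hvol : ∀ n : ℕ, N ≤ n → Wvol G μ o n ≤ C * Real.exp (κ * n)) :
    ∀ k : ℕ, Wvol G μ o k ≤ (C * Real.exp (κ * N)) * Real.exp (κ * k) := by
  have hmono : Monotone (fun n => Wvol G μ o n) :=
    monotone_nat_of_le_succ (fun n => wvol_mono hconn hnonneg hadj hlf o n)
  intro k
  rcases le_or_gt N k with h | h
  · calc Wvol G μ o k ≤ C * Real.exp (κ * k) := hvol k h
      _ ≤ (C * Real.exp (κ * N)) * Real.exp (κ * k) := by
          have : (1:ℝ) ≤ Real.exp (κ * N) := Real.one_le_exp (by positivity)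
          have h2 : (0:ℝ) < Real.exp (κ * k) := Real.exp_pos _
          nlinarith [mul_nonneg (mul_nonneg hC.le h2.le) (sub_nonneg.2 this)]
  · calc Wvol G μ o k ≤ Wvol G μ o N := hmono h.le
      _ ≤ C * Real.exp (κ * N) := hvol N le_rfl
      _ ≤ (C * Real.exp (κ * N)) * Real.exp (κ * k) := by
          have : (1:ℝ) ≤ Real.exp (κ * k) := Real.one_le_exp (by positivity)
          nlinarith [Real.exp_pos (κ * N), mul_pos hC (Real.exp_pos (κ * N))]

lemma tbound (hsymm : ∀ x y, μ x y = μ y x) (hnonneg : ∀ x y, 0 ≤ μ x y)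
    (hadj : ∀ x y, 0 < μ x y ↔ G.Adj x y) (hconn : G.Connected)
    (hlf : ∀ x, (G.neighborSet x).Finite) {p₀ : ℝ} (hp₀ : 1 < p₀)
    (hcond : ∀ x y, G.Adj x y → 1 / p₀ ≤ μ x y / vMeasure μ x)
    (o : V) {κ C₃ ε : ℝ} (hκ : 0 < κ) (hC₃ : 0 < C₃) (hκε : κ < ε)
    (hW : ∀ k : ℕ, Wvol G μ o k ≤ C₃ * Real.exp (κ * k)) :
    ∀ F : Finset V, ∑ z ∈ F, Real.exp (-ε * (G.dist o z : ℝ)) * vMeasure μ z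
      ≤ vMeasure μ o + p₀ * C₃ * (1 - Real.exp (κ - ε))⁻¹ := by
  intro F
  classical
  set ρ : ℝ := Real.exp (κ - ε) with hρdef
  have hρ0 : 0 < ρ := Real.exp_pos _
  have hρ1 : ρ < 1 := by
    rw [hρdef]
    have : κ - ε < 0 := by linarith
    calc Real.exp (κ - ε) < Real.exp 0 := Real.exp_lt_exp.2 this
      _ = 1 := Real.exp_zero
  set n₁ : ℕ := F.sup (fun z => G.dist o z) + 1 with hn₁
  have hmaps : ∀ z ∈ F, G.dist o z ∈ Finset.range n₁ := by
    intro z hz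
    simp only [Finset.mem_range, hn₁]
    have h2 : G.dist o z ≤ F.sup (fun z => G.dist o z) := Finset.le_sup hz
    omega
  rw [← Finset.sum_fiberwise_of_maps_to hmaps
    (fun z => Real.exp (-ε * (G.dist o z : ℝ)) * vMeasure μ z)]
  have hterm : ∀ n ∈ Finset.range n₁,
      ∑ z ∈ F.filter (fun z => G.dist o z = n),
          Real.exp (-ε * (G.dist o z : ℝ)) * vMeasure μ z
        ≤ if n = 0 then vMeasure μ o else p₀ * C₃ * ρ ^ n := by
    intro n _
    have hrw : ∑ z ∈ F.filter (fun z => G.dist o z = n),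
        Real.exp (-ε * (G.dist o z : ℝ)) * vMeasure μ z
        = Real.exp (-ε * (n : ℝ)) * ∑ z ∈ F.filter (fun z => G.dist o z = n), vMeasure μ z := by
      rw [Finset.mul_sum]
      apply Finset.sum_congr rfl
      intro z hz
      simp only [Finset.mem_filter] at hz
      rw [hz.2]
    rw [hrw]
    rcases Nat.eq_zero_or_pos n with h0 | hpos
    · subst h0
      rw [if_pos rfl]
      have hsub : F.filter (fun z => G.dist o z = 0) ⊆ {o} := by
        intro z hz
        simp only [Finset.mem_filter] at hz
        simp [(hconn.dist_eq_zero_iff.1 hz.2).symm]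
      have hvo : ∀ z, 0 ≤ vMeasure μ z := by
        intro z
        rw [vMeasure_eq hnonneg hadj hlf z]
        exact Finset.sum_nonneg fun y _ => hnonneg z y
      calc Real.exp (-ε * ((0:ℕ) : ℝ)) * ∑ z ∈ F.filter (fun z => G.dist o z = 0), vMeasure μ z
          = ∑ z ∈ F.filter (fun z => G.dist o z = 0), vMeasure μ z := by
            norm_num
        _ ≤ ∑ z ∈ ({o} : Finset V), vMeasure μ z :=
            Finset.sum_le_sum_of_subset_of_nonneg hsub (fun z _ _ => hvo z)
        _ = vMeasure μ o := Finset.sum_singleton _ _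
    · obtain ⟨k, rfl⟩ : ∃ k, n = k + 1 := ⟨n - 1, by omega⟩
      rw [if_neg (by omega)]
      have hsb := sphere_bound hsymm hnonneg hadj hconn hlf hp₀ hcond o k
        (F.filter (fun z => G.dist o z = k + 1))
        (fun z hz => (Finset.mem_filter.1 hz).2)
      have hWk := hW k
      have hexp0 : (0:ℝ) < Real.exp (-ε * ((k+1 : ℕ) : ℝ)) := Real.exp_pos _
      have hchain : Real.exp (-ε * ((k+1 : ℕ) : ℝ)) * (p₀ * (C₃ * Real.exp (κ * k)))
          ≤ p₀ * C₃ * ρ ^ (k+1) := by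
        have h1 : Real.exp (-ε * ((k+1 : ℕ) : ℝ)) * Real.exp (κ * k)
            ≤ ρ ^ (k+1) := by
          rw [← Real.exp_add]
          have h2 : ρ ^ (k+1) = Real.exp (((k+1 : ℕ) : ℝ) * (κ - ε)) := by
            rw [hρdef, Real.exp_nat_mul]
          rw [h2]
          apply Real.exp_le_exp.2
          push_cast
          nlinarith
        nlinarith [Real.exp_pos (κ * k), Real.exp_pos (-ε * ((k+1:ℕ) : ℝ)),
          mul_pos (mul_pos (by linarith : (0:ℝ) < p₀) hC₃) hexp0]
      calc Real.exp (-ε * ((k+1 : ℕ) : ℝ))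
            * ∑ z ∈ F.filter (fun z => G.dist o z = k + 1), vMeasure μ z
          ≤ Real.exp (-ε * ((k+1 : ℕ) : ℝ)) * (p₀ * Wvol G μ o k) := by
            apply mul_le_mul_of_nonneg_left hsb hexp0.le
        _ ≤ Real.exp (-ε * ((k+1 : ℕ) : ℝ)) * (p₀ * (C₃ * Real.exp (κ * k))) := by
            apply mul_le_mul_of_nonneg_left _ hexp0.le
            apply mul_le_mul_of_nonneg_left hWk (by linarith)
        _ ≤ p₀ * C₃ * ρ ^ (k+1) := hchain
  calc ∑ n ∈ Finset.range n₁, ∑ z ∈ F.filter (fun z => G.dist o z = n),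
        Real.exp (-ε * (G.dist o z : ℝ)) * vMeasure μ z
      ≤ ∑ n ∈ Finset.range n₁, (if n = 0 then vMeasure μ o else p₀ * C₃ * ρ ^ n) :=
        Finset.sum_le_sum hterm
    _ ≤ vMeasure μ o + ∑ n ∈ Finset.range n₁, p₀ * C₃ * ρ ^ n := by
        have : ∀ n ∈ Finset.range n₁, (if n = 0 then vMeasure μ o else p₀ * C₃ * ρ ^ n)
            ≤ (if n = 0 then vMeasure μ o else 0) + p₀ * C₃ * ρ ^ n := by
          intro n _
          split
          · have : (0:ℝ) ≤ p₀ * C₃ * ρ ^ n := by positivity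
            linarith
          · simp
        calc ∑ n ∈ Finset.range n₁, (if n = 0 then vMeasure μ o else p₀ * C₃ * ρ ^ n)
            ≤ ∑ n ∈ Finset.range n₁, ((if n = 0 then vMeasure μ o else 0) + p₀ * C₃ * ρ ^ n) :=
              Finset.sum_le_sum this
          _ = (∑ n ∈ Finset.range n₁, (if n = 0 then vMeasure μ o else 0))
              + ∑ n ∈ Finset.range n₁, p₀ * C₃ * ρ ^ n := Finset.sum_add_distrib
          _ ≤ vMeasure μ o + ∑ n ∈ Finset.range n₁, p₀ * C₃ * ρ ^ n := by
              have h1 : ∑ n ∈ Finset.range n₁, (if n = 0 then vMeasure μ o else 0)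
                  ≤ vMeasure μ o := by
                rw [Finset.sum_ite_eq' (Finset.range n₁) 0 (fun _ => vMeasure μ o)]
                split
                · exact le_rfl
                · have hvo : 0 ≤ vMeasure μ o := by
                    rw [vMeasure_eq hnonneg hadj hlf o]
                    exact Finset.sum_nonneg fun y _ => hnonneg o y
                  exact hvo
              linarith
    _ ≤ vMeasure μ o + p₀ * C₃ * (1 - ρ)⁻¹ := by
        have hsum : ∑ n ∈ Finset.range n₁, ρ ^ n ≤ (1 - ρ)⁻¹ := by
          exact sum_le_hasSum (Finset.range n₁) (fun n _ => by positivity)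
            (hasSum_geometric_of_lt_one hρ0.le hρ1)
        have h2 : ∑ n ∈ Finset.range n₁, p₀ * C₃ * ρ ^ n ≤ p₀ * C₃ * (1 - ρ)⁻¹ := by
          rw [← Finset.mul_sum]
          apply mul_le_mul_of_nonneg_left hsum (by positivity)
        linarith
        
end wvol

section globalarg

variable {G : SimpleGraph V} {μ : V → V → ℝ}

lemma no_descent (hsymm : ∀ x y, μ x y = μ y x) (hnonneg : ∀ x y, 0 ≤ μ x y)
    (hadj : ∀ x y, 0 < μ x y ↔ G.Adj x y) (hconn : G.Connected)
    (hlf : ∀ x, (G.neighborSet x).Finite)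
    (o : V) (v : V → ℝ) {c : ℝ} (hc : 0 < c) (hvb : ∀ x, 0 < v x ∧ v x ≤ c)
    {m : ℝ} (hm : 1 < m) {c8 ε M : ℝ} (hc8a : 0 < c8) (hc8b : c8 ≤ 1/2)
    (hamp : ∀ z, innF hlf μ v m z ≤ (1 - c8) * outF hlf μ v m z)
    (hεc : Real.exp ε * (1 - c8) < 1) (hε : 0 < ε)
    (hT : ∀ F : Finset V, ∑ z ∈ F, Real.exp (-ε * (G.dist o z : ℝ)) * vMeasure μ z ≤ M) :
    ∀ a b, G.Adj a b → v a ≤ v b := by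
  classical
  set ω : V → ℝ := fun z => Real.exp (-ε * (G.dist o z : ℝ)) with hωdef
  have hωpos : ∀ z, 0 < ω z := fun z => Real.exp_pos _
  set T : V → V → ℝ := fun z y => μ z y * (max (v z - v y) 0) ^ (m - 1) with hTdef
  have hTnn : ∀ z y, 0 ≤ T z y := fun z y =>
    mul_nonneg (hnonneg z y) (Real.rpow_nonneg (le_max_right _ _) _)
  have hTzero : ∀ z y, ¬ G.Adj z y → T z y = 0 := by
    intro z y h
    rw [hTdef]
    simp [mu_zero hnonneg hadj z y h]
  have houtT : ∀ z, outF hlf μ v m z = ∑ y ∈ nbr G hlf z, T z y := fun z => rfl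
  have hinT : ∀ y, innF hlf μ v m y = ∑ z ∈ nbr G hlf y, T z y := by
    intro y
    rw [innF]
    apply Finset.sum_congr rfl
    intro z _
    rw [hTdef, hsymm y z]
  set Sout : ENNReal := ∑' z, ENNReal.ofReal (ω z * outF hlf μ v m z) with hSoutdef
  set Sin : ENNReal := ∑' y, ENNReal.ofReal (ω y * innF hlf μ v m y) with hSindef
  have houtnn : ∀ z, 0 ≤ outF hlf μ v m z := fun z => outF_nonneg hlf hnonneg v m z
  have hinnn : ∀ z, 0 ≤ innF hlf μ v m z := fun z => innF_nonneg hlf hnonneg v m z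
  -- inner sum evaluations
  have hSout_inner : ∀ z, ENNReal.ofReal (ω z * outF hlf μ v m z)
      = ∑' y, ENNReal.ofReal (ω z * T z y) := by
    intro z
    rw [tsum_eq_sum (s := nbr G hlf z) (fun y hy => by
      rw [hTzero z y (fun ha => hy ((mem_nbr hlf).2 ha)), mul_zero, ENNReal.ofReal_zero])]
    rw [houtT, Finset.mul_sum, ENNReal.ofReal_sum_of_nonneg
      (fun y _ => mul_nonneg (hωpos z).le (hTnn z y))]
  have hSin_inner : ∀ y, ENNReal.ofReal (ω y * innF hlf μ v m y)
      = ∑' z, ENNReal.ofReal (ω y * T z y) := by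
    intro y
    rw [tsum_eq_sum (s := nbr G hlf y) (fun z hz => by
      have : ¬ G.Adj z y := fun ha => hz ((mem_nbr hlf).2 ha.symm)
      rw [hTzero z y this, mul_zero, ENNReal.ofReal_zero])]
    rw [hinT, Finset.mul_sum, ENNReal.ofReal_sum_of_nonneg
      (fun z _ => mul_nonneg (hωpos y).le (hTnn z y))]
  -- (b) Sin ≤ (1-c8) Sout
  have hb : Sin ≤ ENNReal.ofReal (1 - c8) * Sout := by
    rw [hSindef, hSoutdef, ← ENNReal.tsum_mul_left]
    apply ENNReal.tsum_le_tsum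
    intro z
    rw [← ENNReal.ofReal_mul (by linarith : (0:ℝ) ≤ 1 - c8)]
    apply ENNReal.ofReal_le_ofReal
    calc ω z * innF hlf μ v m z ≤ ω z * ((1 - c8) * outF hlf μ v m z) :=
          mul_le_mul_of_nonneg_left (hamp z) (hωpos z).le
      _ = (1 - c8) * (ω z * outF hlf μ v m z) := by ring
  -- (a) Sout ≤ e^ε Sin
  have ha : Sout ≤ ENNReal.ofReal (Real.exp ε) * Sin := by
    have hstep : ∀ z y, ENNReal.ofReal (ω z * T z y)
        ≤ ENNReal.ofReal (Real.exp ε) * ENNReal.ofReal (ω y * T z y) := by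
      intro z y
      by_cases hzy : G.Adj z y
      · have hd : G.dist o y ≤ G.dist o z + 1 := by
          have ht := hconn.dist_triangle (u := o) (v := z) (w := y)
          have : G.dist z y ≤ 1 := (SimpleGraph.dist_eq_one_iff_adj.2 hzy).le
          omega
        have hω2 : ω z ≤ Real.exp ε * ω y := by
          rw [hωdef, ← Real.exp_add]
          apply Real.exp_le_exp.2
          have : (G.dist o y : ℝ) ≤ (G.dist o z : ℝ) + 1 := by exact_mod_cast hd
          nlinarith [mul_le_mul_of_nonneg_left this hε.le]
        rw [← ENNReal.ofReal_mul (Real.exp_pos ε).le]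
        apply ENNReal.ofReal_le_ofReal
        calc ω z * T z y ≤ (Real.exp ε * ω y) * T z y :=
              mul_le_mul_of_nonneg_right hω2 (hTnn z y)
          _ = Real.exp ε * (ω y * T z y) := by ring
      · rw [hTzero z y hzy, mul_zero, ENNReal.ofReal_zero]
        exact zero_le
    calc Sout = ∑' z, ∑' y, ENNReal.ofReal (ω z * T z y) := by
          rw [hSoutdef]
          exact tsum_congr hSout_inner
      _ ≤ ∑' z, ∑' y, ENNReal.ofReal (Real.exp ε) * ENNReal.ofReal (ω y * T z y) :=
          ENNReal.tsum_le_tsum (fun z => ENNReal.tsum_le_tsum (fun y => hstep z y))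
      _ = ∑' y, ∑' z, ENNReal.ofReal (Real.exp ε) * ENNReal.ofReal (ω y * T z y) :=
          ENNReal.tsum_comm
      _ = ENNReal.ofReal (Real.exp ε) * ∑' y, ∑' z, ENNReal.ofReal (ω y * T z y) := by
          rw [← ENNReal.tsum_mul_left]
          exact tsum_congr (fun y => ENNReal.tsum_mul_left)
      _ = ENNReal.ofReal (Real.exp ε) * Sin := by
          rw [hSindef]
          congr 1
          exact (tsum_congr hSin_inner).symm
  -- (c) finiteness
  have hvnn : ∀ z, 0 ≤ vMeasure μ z := by
    intro z
    rw [vMeasure_eq hnonneg hadj hlf z]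
    exact Finset.sum_nonneg fun y _ => hnonneg z y
  have hcm : (0:ℝ) ≤ c ^ (m - 1) := Real.rpow_nonneg hc.le _
  have hfin : Sout ≤ ENNReal.ofReal (c ^ (m - 1) * M) := by
    have hout_le : ∀ z, outF hlf μ v m z ≤ vMeasure μ z * c ^ (m - 1) := by
      intro z
      have h1 : ∀ y ∈ nbr G hlf z,
          μ z y * (max (v z - v y) 0) ^ (m - 1) ≤ μ z y * c ^ (m - 1) := by
        intro y _
        apply mul_le_mul_of_nonneg_left _ (hnonneg z y)
        apply Real.rpow_le_rpow (le_max_right _ _) _ (by linarith)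
        exact max_le (by have := (hvb y).1; have := (hvb z).2; linarith) hc.le
      calc outF hlf μ v m z ≤ ∑ y ∈ nbr G hlf z, μ z y * c ^ (m - 1) :=
            Finset.sum_le_sum h1
        _ = vMeasure μ z * c ^ (m - 1) := by
            rw [← Finset.sum_mul, ← vMeasure_eq hnonneg hadj hlf z]
    have h2 : Sout ≤ ∑' z, ENNReal.ofReal (c ^ (m - 1)) * ENNReal.ofReal (ω z * vMeasure μ z) := by
      rw [hSoutdef]
      apply ENNReal.tsum_le_tsum
      intro z
      rw [← ENNReal.ofReal_mul hcm]
      apply ENNReal.ofReal_le_ofReal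
      calc ω z * outF hlf μ v m z ≤ ω z * (vMeasure μ z * c ^ (m - 1)) :=
            mul_le_mul_of_nonneg_left (hout_le z) (hωpos z).le
        _ = c ^ (m - 1) * (ω z * vMeasure μ z) := by ring
    rw [ENNReal.tsum_mul_left] at h2
    have h3 : ∑' z, ENNReal.ofReal (ω z * vMeasure μ z) ≤ ENNReal.ofReal M := by
      rw [ENNReal.tsum_eq_iSup_sum]
      apply iSup_le
      intro F
      rw [← ENNReal.ofReal_sum_of_nonneg (fun z _ => mul_nonneg (hωpos z).le (hvnn z))]
      exact ENNReal.ofReal_le_ofReal (hT F)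
    calc Sout ≤ ENNReal.ofReal (c ^ (m - 1)) * ENNReal.ofReal M :=
          le_trans h2 (mul_le_mul_right h3 _)
      _ = ENNReal.ofReal (c ^ (m - 1) * M) := (ENNReal.ofReal_mul hcm).symm
  have hfin2 : Sout ≠ ⊤ := by
    intro htop
    rw [htop] at hfin
    exact (lt_irrefl ⊤ (lt_of_le_of_lt hfin ENNReal.ofReal_lt_top)).elim
  -- (d) Sout = 0
  have hSout0 : Sout = 0 := by
    by_contra hS0
    have hchain : Sout ≤ ENNReal.ofReal (Real.exp ε * (1 - c8)) * Sout := by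
      calc Sout ≤ ENNReal.ofReal (Real.exp ε) * Sin := ha
        _ ≤ ENNReal.ofReal (Real.exp ε) * (ENNReal.ofReal (1 - c8) * Sout) :=
            mul_le_mul_right hb _
        _ = (ENNReal.ofReal (Real.exp ε) * ENNReal.ofReal (1 - c8)) * Sout := by
            rw [mul_assoc]
        _ = ENNReal.ofReal (Real.exp ε * (1 - c8)) * Sout := by
            rw [← ENNReal.ofReal_mul (Real.exp_pos ε).le]
    have hlt : ENNReal.ofReal (Real.exp ε * (1 - c8)) < 1 := ENNReal.ofReal_lt_one.2 hεc
    have : ENNReal.ofReal (Real.exp ε * (1 - c8)) * Sout < 1 * Sout :=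
      ENNReal.mul_lt_mul_left hS0 hfin2 hlt
    rw [one_mul] at this
    exact absurd (lt_of_le_of_lt hchain this) (lt_irrefl _)
  -- (e) conclusion
  intro a b hab
  by_contra hlt
  push_neg at hlt
  have hterm0 : ENNReal.ofReal (ω a * outF hlf μ v m a) = 0 :=
    ENNReal.tsum_eq_zero.1 hSout0 a
  rw [ENNReal.ofReal_eq_zero] at hterm0
  have hout0 : outF hlf μ v m a = 0 := by
    have h1 := mul_nonneg (hωpos a).le (houtnn a)
    have h2 : outF hlf μ v m a ≤ 0 := by
      by_contra h3
      push_neg at h3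
      nlinarith [hωpos a]
    linarith [houtnn a]
  have hterm_pos : 0 < μ a b * (max (v a - v b) 0) ^ (m - 1) := by
    apply mul_pos ((hadj a b).2 hab)
    apply Real.rpow_pos_of_pos
    rw [max_eq_left (by linarith)]
    linarith
  have hle : μ a b * (max (v a - v b) 0) ^ (m - 1) ≤ outF hlf μ v m a := by
    apply Finset.single_le_sum (f := fun y => μ a y * (max (v a - v y) 0) ^ (m - 1))
      (fun y _ => mul_nonneg (hnonneg a y) (Real.rpow_nonneg (le_max_right _ _) _))
      ((mem_nbr hlf).2 hab)
  rw [hout0] at hle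
  linarith

end globalarg

end Helper8

open Helper8 in
theorem statement8
    (G : SimpleGraph V) (μ : V → V → ℝ)
    (hsymm : ∀ x y, μ x y = μ y x)
    (hnonneg : ∀ x y, 0 ≤ μ x y)
    (hadj : ∀ x y, 0 < μ x y ↔ G.Adj x y)
    (hinf : Infinite V) (hconn : G.Connected)
    (hlf : ∀ x, (G.neighborSet x).Finite)
    (p₀ : ℝ) (hp₀ : 1 < p₀)
    (hcond : ∀ x y, G.Adj x y → 1 / p₀ ≤ μ x y / vMeasure μ x)
    (m p q : ℝ) (hm : 1 < m)
    (hpq : p + q = m - 1)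
    (hreg : (0 ≤ p ∧ 0 < q) ∨ (q < 0 ∧ m < 3))
    (o : V) :
    ∃ κ₀ > 0, ∀ κ C : ℝ, ∀ N : ℕ, 0 < κ → κ < κ₀ → 0 < C →
      (∀ n : ℕ, N ≤ n → Wvol G μ o n ≤ C * Real.exp (κ * n)) →
      ∀ u : V → ℝ, (∀ x, 0 < u x) →
        (∀ x, q < 0 → 0 < gradNorm μ u x) →
        (∀ x, lapM μ m u x + u x ^ p * gradNorm μ u x ^ q ≤ 0) →
        ∃ c : ℝ, ∀ x, u x = c := by
  classical
  have hm1 : (0:ℝ) < m - 1 := by linarith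
  set c8 : ℝ := min (min (Real.sqrt (1 / (2 * p₀)) ^ q) ((p₀ ^ (1 / (m - 1))) ^ q)) (1/2)
    with hc8def
  have hcs : 0 < Real.sqrt (1 / (2 * p₀)) := Real.sqrt_pos.2 (by positivity)
  have hc8a : 0 < c8 := by
    rw [hc8def]
    refine lt_min (lt_min ?_ ?_) (by norm_num)
    · exact Real.rpow_pos_of_pos hcs q
    · exact Real.rpow_pos_of_pos (Real.rpow_pos_of_pos (by linarith) _) q
  have hc8b : c8 ≤ 1/2 := min_le_right _ _
  have h1c8 : 0 < 1 - c8 := by linarith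
  set κ₀ : ℝ := Real.log (1 / (1 - c8)) with hκ₀def
  have hκ₀pos : 0 < κ₀ := Real.log_pos ((one_lt_div h1c8).2 (by linarith))
  refine ⟨κ₀, hκ₀pos, ?_⟩
  intro κ C N hκ hκκ₀ hC hvol u hu hgrad hineq
  have hex : ∀ x, ∃ y, G.Adj x y := fun x => exists_adj hinf hconn x
  have hv : ∀ x, 0 < vMeasure μ x := fun x => vMeasure_pos hnonneg hadj hlf x (hex x)
  set ε : ℝ := (κ + κ₀) / 2 with hεdef
  have hεκ : κ < ε := by rw [hεdef]; linarith
  have hεκ₀ : ε < κ₀ := by rw [hεdef]; linarith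
  have hεpos : 0 < ε := by rw [hεdef]; linarith
  have hεc : Real.exp ε * (1 - c8) < 1 := by
    have h1 : Real.exp ε < Real.exp κ₀ := Real.exp_lt_exp.2 hεκ₀
    have h2 : Real.exp κ₀ = 1 / (1 - c8) := by
      rw [hκ₀def]
      exact Real.exp_log (by positivity)
    have h3 : Real.exp κ₀ * (1 - c8) = 1 := by
      rw [h2]; field_simp
    nlinarith [mul_lt_mul_of_pos_right h1 h1c8]
  have hC₃pos : 0 < C * Real.exp (κ * (N:ℝ)) := mul_pos hC (Real.exp_pos _)
  have hW := wvol_exp hconn hnonneg hadj hlf o hκ hC hvol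
  have hTb := tbound hsymm hnonneg hadj hconn hlf hp₀ hcond o hκ hC₃pos hεκ hW
  have hEQc8 : ∀ z, innF hlf μ u m z + c8 * outF hlf μ u m z ≤ outF hlf μ u m z := by
    intro z
    have h1 := eq_main hnonneg hadj hlf u (by linarith : m ≠ 1) z (hv z) (hineq z)
    have h2 := boost hnonneg hadj hlf hp₀ hcond u hu hm hpq hreg hgrad hineq z (hv z) (hex z)
    rw [← hc8def] at h2
    linarith
  have hkey : ∀ c : ℝ, 0 < c → ∀ a b, G.Adj a b → min (u a) c = min (u b) c := by
    intro c hcpos a b hab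
    have hamp : ∀ z, innF hlf μ (fun x => min (u x) c) m z
        ≤ (1 - c8) * outF hlf μ (fun x => min (u x) c) m z := by
      intro z
      exact trunc_amplify hnonneg hadj hlf u hu hm hc8a hc8b hcpos z (hEQc8 z)
    have hvb : ∀ x, 0 < min (u x) c ∧ min (u x) c ≤ c :=
      fun x => ⟨lt_min (hu x) hcpos, min_le_right _ _⟩
    have hnd := no_descent hsymm hnonneg hadj hconn hlf o (fun x => min (u x) c) hcpos hvb hm
      hc8a hc8b hamp hεc hεpos hTb
    exact le_antisymm (hnd a b hab) (hnd b a hab.symm)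
  have hedge : ∀ a b, G.Adj a b → u a = u b := by
    intro a b hab
    have hc := hkey (max (u a) (u b)) (lt_max_of_lt_left (hu a)) a b hab
    rw [min_eq_left (le_max_left _ _), min_eq_left (le_max_right _ _)] at hc
    exact hc
  refine ⟨u o, ?_⟩
  have hwalk : ∀ (a b : V) (w : G.Walk a b), u a = u b := by
    intro a b w
    induction w with
    | nil => rfl
    | cons h pw ih => exact (hedge _ _ h).trans ih
  intro x
  obtain ⟨w⟩ := hconn x o
  exact hwalk x o w
end
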